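/- arXiv:math/0612204 — 9 statements merged into one kernel-verified Lean document; each statement's English description precedes it below -/
import Mathlib

section
/- Let (Λ, Γ, p, m, 𝔰) be a covering system of k-graphs. Then there exists a (k+1)-graph Λ ×_{p,𝔰} Γ, unique up to degree-preserving isomorphism compatible with the data below, such that: (1) there are injective functors ι : Λ → Λ ×_{p,𝔰} Γ and j : Γ → Λ ×_{p,𝔰} Γ with d(ι(α)) = (d(α), 0) and d(j(β)) = (d(β), 0) for all α ∈ Λ, β ∈ Γ; (2) ι(Λ) ∩ j(Γ) = ∅ and ι(Λ) ∪ j(Γ) = {τ ∈ Λ ×_{p,𝔰} Γ : d(τ)_{k+1} = 0}; (3) there is a bijection e : Γ⁰ × {1,…,m} → (Λ ×_{p,𝔰} Γ)^{e_{k+1}} (the morphisms of degree e_{k+1}); (4) s(e(v,l)) = j(v) and r(e(v,l)) = ι(p(v)) for all v ∈ Γ⁰ and 1 ≤ l ≤ m; (5) e(r(λ), l)·j(λ) = ι(p(λ))·e(s(λ), 𝔰(λ)⁻¹ l) for all λ ∈ Γ and 1 ≤ l ≤ m. Moreover, if the covering system is row finite then Λ ×_{p,𝔰} Γ is row finite;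 and Λ is locally convex if and only if Γ is locally convex, in which case Λ ×_{p,𝔰} Γ is also locally convex. -/
/-- A `k`-graph: a countable small category equipped with a degree functor
`d : Λ → ℕ^k` satisfying the unique factorisation property. -/
structure KGraph (k : ℕ) where
  V : Type
  E : Type
  countable_V : Countable V
  countable_E : Countable E
  r : E → V
  s : E → V
  ident : V → E
  comp : (μ ν : E) → s μ = r ν → E
  d : E → Fin k → ℕ
  r_ident : ∀ v, r (ident v) = v
  s_ident : ∀ v, s (ident v) = v
  r_comp : ∀ μ ν h, r (comp μ ν h) = r μ
  s_comp : ∀ μ ν h, s (comp μ ν h) = s ν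
  ident_comp : ∀ (v ν) (h : s (ident v) = r ν), comp (ident v) ν h = ν
  comp_ident : ∀ (μ v) (h : s μ = r (ident v)), comp μ (ident v) h = μ
  comp_assoc : ∀ (μ ν ρ) (h₁ : s μ = r ν) (h₂ : s ν = r ρ),
    comp (comp μ ν h₁) ρ ((s_comp μ ν h₁).trans h₂) =
      comp μ (comp ν ρ h₂) (h₁.trans (r_comp ν ρ h₂).symm)
  d_ident : ∀ v, d (ident v) = 0
  d_comp : ∀ μ ν h, d (comp μ ν h) = d μ + d ν
  factor : ∀ (lam : E) (m n : Fin k → ℕ), d lam = m + n →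
    ∃! μν : E × E, ∃ h : s μν.1 = r μν.2,
      d μν.1 = m ∧ d μν.2 = n ∧ comp μν.1 μν.2 h = lam

namespace KGraph

variable {k : ℕ}

/-- A `k`-graph is row-finite if `vΛⁿ` is finite for every vertex `v` and `n ∈ ℕ^k`. -/
def RowFinite (Λ : KGraph k) : Prop :=
  ∀ (v : Λ.V) (n : Fin k → ℕ), {e : Λ.E | Λ.r e = v ∧ Λ.d e = n}.Finite

/-- A `k`-graph has no sources if `vΛⁿ` is nonempty for every `v` and `n`. -/
def NoSources (Λ : KGraph k) : Prop :=
  ∀ (v : Λ.V) (n : Fin k → ℕ), ∃ e : Λ.E, Λ.r e = v ∧ Λ.d e = n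

/-- A `k`-graph is locally convex if whenever `i < j`, `e ∈ Λ^{e_i}`, `f ∈ Λ^{e_j}`
and `r e = r f`, both `e` and `f` extend to paths of degree `e_i + e_j`. -/
def LocallyConvex (Λ : KGraph k) : Prop :=
  ∀ (i j : Fin k), i < j → ∀ (e f : Λ.E),
    Λ.d e = Pi.single i 1 → Λ.d f = Pi.single j 1 → Λ.r e = Λ.r f →
    (∃ (e' : Λ.E) (_ : Λ.s e = Λ.r e'), Λ.d e' = Pi.single j 1) ∧
    (∃ (f' : Λ.E) (_ : Λ.s f = Λ.r f'), Λ.d f' = Pi.single i 1)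

/-- A morphism of `k`-graphs: a degree-preserving functor. -/
structure Hom (Λ Γ : KGraph k) where
  vmap : Λ.V → Γ.V
  emap : Λ.E → Γ.E
  map_r : ∀ e, Γ.r (emap e) = vmap (Λ.r e)
  map_s : ∀ e, Γ.s (emap e) = vmap (Λ.s e)
  map_ident : ∀ v, emap (Λ.ident v) = Γ.ident (vmap v)
  map_comp : ∀ (μ ν) (h : Λ.s μ = Λ.r ν),
    emap (Λ.comp μ ν h) = Γ.comp (emap μ) (emap ν) (by rw [map_s, map_r, h])
  map_d : ∀ e, Γ.d (emap e) = Λ.d e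

/-- A covering of the `k`-graph `Λ` by `Γ`: a surjective morphism `p : Γ → Λ` which is
bijective on the source-fibres and range-fibres at each vertex of `Γ`. -/
structure IsCovering {Λ Γ : KGraph k} (p : Hom Γ Λ) : Prop where
  surj_v : Function.Surjective p.vmap
  surj_e : Function.Surjective p.emap
  bij_s : ∀ v : Γ.V, Set.BijOn p.emap {e : Γ.E | Γ.s e = v} {e : Λ.E | Λ.s e = p.vmap v}
  bij_r : ∀ v : Γ.V, Set.BijOn p.emap {e : Γ.E | Γ.r e = v} {e : Λ.E | Λ.r e = p.vmap v}

/-- A covering is finite if the fibre over each vertex is finite. -/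
def FiniteCovering {Λ Γ : KGraph k} (p : Hom Γ Λ) : Prop :=
  ∀ v : Λ.V, {w : Γ.V | p.vmap w = v}.Finite

/-- A cocycle `𝔰 : Γ → S_m` on a `k`-graph: a functor into the permutation group. -/
def IsCocycle {Γ : KGraph k} {m : ℕ} (σ : Γ.E → Equiv.Perm (Fin m)) : Prop :=
  ∀ (μ ν : Γ.E) (h : Γ.s μ = Γ.r ν), σ (Γ.comp μ ν h) = σ μ * σ ν

/-- A cycle with an entrance: `λ` with `s λ = r λ` together with `μ ∈ r(λ)Λ` with
`d μ ≤ d λ` such that `μ` is not the initial segment `λ(0, d μ)` of `λ`. -/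
def HasCycleWithEntrance (Λ : KGraph k) : Prop :=
  ∃ (lam mu : Λ.E), Λ.s lam = Λ.r lam ∧ Λ.r mu = Λ.r lam ∧ Λ.d mu ≤ Λ.d lam ∧
    ¬ ∃ (ρ : Λ.E) (h : Λ.s mu = Λ.r ρ), Λ.comp mu ρ h = lam

end KGraph

/-- A functor from a `k`-graph `Λ` into a `(k+1)`-graph `X` whose degrees are those of
`Λ` extended by `0` in the last coordinate, i.e. `d(F α) = (d α, 0)`. -/
structure LiftHom {k : ℕ} (Λ : KGraph k) (X : KGraph (k + 1)) where
  vmap : Λ.V → X.V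
  emap : Λ.E → X.E
  map_r : ∀ e, X.r (emap e) = vmap (Λ.r e)
  map_s : ∀ e, X.s (emap e) = vmap (Λ.s e)
  map_ident : ∀ v, emap (Λ.ident v) = X.ident (vmap v)
  map_comp : ∀ (μ ν) (h : Λ.s μ = Λ.r ν),
    emap (Λ.comp μ ν h) = X.comp (emap μ) (emap ν) (by rw [map_s, map_r, h])
  map_d : ∀ e, X.d (emap e) = Fin.snoc (Λ.d e) 0

/-- The defining properties (1)–(5) of the `(k+1)`-graph `Λ ×_{p,𝔰} Γ` associated to a
covering system `(Λ, Γ, p, m, 𝔰)`: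
(1) `ι : Λ → X` and `j : Γ → X` are injective functors with degrees `(d α, 0)`;
(2) `ι(Λ)` and `j(Γ)` are disjoint and their union is `{τ : d(τ)_{k+1} = 0}`;
(3) `e : Γ⁰ × {1,…,m} → X^{e_{k+1}}` is a bijection;
(4) `s(e(v,l)) = j(v)` and `r(e(v,l)) = ι(p(v))`;
(5) `e(r λ, l)·j(λ) = ι(p(λ))·e(s λ, 𝔰(λ)⁻¹ l)`. -/
def CoveringSystemGraphProp {k : ℕ} (Λ Γ : KGraph k) (p : KGraph.Hom Γ Λ) (m : ℕ)
    (σ : Γ.E → Equiv.Perm (Fin m)) (X : KGraph (k + 1))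
    (ι : LiftHom Λ X) (j : LiftHom Γ X) (e : Γ.V × Fin m → X.E) : Prop :=
  Function.Injective ι.vmap ∧ Function.Injective ι.emap ∧
  Function.Injective j.vmap ∧ Function.Injective j.emap ∧
  (Set.range ι.emap ∩ Set.range j.emap = ∅) ∧
  (Set.range ι.emap ∪ Set.range j.emap = {τ : X.E | X.d τ (Fin.last k) = 0}) ∧
  Function.Injective e ∧
  (Set.range e = {τ : X.E | X.d τ = Pi.single (Fin.last k) 1}) ∧
  (∀ (v : Γ.V) (l : Fin m),
    X.s (e (v, l)) = j.vmap v ∧ X.r (e (v, l)) = ι.vmap (p.vmap v)) ∧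
  (∀ (lam : Γ.E) (l : Fin m)
    (h₁ : X.s (e (Γ.r lam, l)) = X.r (j.emap lam))
    (h₂ : X.s (ι.emap (p.emap lam)) = X.r (e (Γ.s lam, (σ lam)⁻¹ l))),
    X.comp (e (Γ.r lam, l)) (j.emap lam) h₁ =
      X.comp (ι.emap (p.emap lam)) (e (Γ.s lam, (σ lam)⁻¹ l)) h₂)

section Aux

open KGraph

variable {k : ℕ}

namespace CSGAux

/-- snoc arithmetic -/
theorem snoc_add (a b : Fin k → ℕ) (x y : ℕ) :
    (Fin.snoc a x + Fin.snoc b y : Fin (k+1) → ℕ) = Fin.snoc (a + b) (x + y) := by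
  funext i
  refine Fin.lastCases ?_ ?_ i <;> simp

theorem snoc_single_last :
    (Fin.snoc (0 : Fin k → ℕ) 1 : Fin (k+1) → ℕ) = Pi.single (Fin.last k) 1 := by
  funext i
  refine Fin.lastCases ?_ ?_ i
  · simp
  · intro i
    rw [Fin.snoc_castSucc, Pi.single_eq_of_ne (Fin.castSucc_lt_last i).ne]
    rfl

theorem snoc_single_castSucc (i : Fin k) :
    (Fin.snoc (Pi.single i 1 : Fin k → ℕ) 0 : Fin (k+1) → ℕ) =
      Pi.single (Fin.castSucc i) 1 := by
  funext x
  refine Fin.lastCases ?_ ?_ x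
  · rw [Fin.snoc_last, Pi.single_eq_of_ne (Fin.castSucc_lt_last i).ne']
  · intro x
    rw [Fin.snoc_castSucc]
    rcases eq_or_ne x i with rfl | hx
    · simp
    · rw [Pi.single_eq_of_ne hx, Pi.single_eq_of_ne (by simpa using hx)]

theorem snoc_inj {a b : Fin k → ℕ} {x y : ℕ}
    (h : (Fin.snoc a x : Fin (k+1) → ℕ) = Fin.snoc b y) : a = b ∧ x = y := by
  constructor
  · funext i
    have := congrFun h (Fin.castSucc i)
    simpa using this
  · have := congrFun h (Fin.last k)
    simpa using this

theorem eq_snoc_of_last_eq {n : Fin (k+1) → ℕ} (x : ℕ) (h : n (Fin.last k) = x) :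
    n = Fin.snoc (Fin.init n) x := by
  rw [← h]
  exact (Fin.snoc_init_self n).symm

/-- a degree-zero morphism is an identity -/
theorem eq_ident_of_d_eq_zero (Λ : KGraph k) {α : Λ.E} (h : Λ.d α = 0) :
    α = Λ.ident (Λ.r α) := by
  obtain ⟨⟨μ, ν⟩, _, huniq⟩ := Λ.factor α 0 0 (by simp [h])
  have h1 : (Λ.ident (Λ.r α), α) = (μ, ν) :=
    huniq _ ⟨Λ.s_ident _, Λ.d_ident _, h, Λ.ident_comp _ _ _⟩
  have h2 : (α, Λ.ident (Λ.s α)) = (μ, ν) :=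
    huniq _ ⟨(Λ.r_ident _).symm ▸ rfl, h, Λ.d_ident _, Λ.comp_ident _ _ _⟩
  have := (congrArg Prod.fst h1).trans (congrArg Prod.fst h2).symm
  exact this.symm

theorem ident_injective (Λ : KGraph k) : Function.Injective Λ.ident := by
  intro v w h
  rw [← Λ.r_ident v, ← Λ.r_ident w, h]

theorem comp_congr (Λ : KGraph k) {μ μ' ν ν' : Λ.E} (hμ : μ = μ') (hν : ν = ν')
    (h : Λ.s μ = Λ.r ν) (h' : Λ.s μ' = Λ.r ν') :
    Λ.comp μ ν h = Λ.comp μ' ν' h' := by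
  subst hμ; subst hν; rfl

section Lifts

variable {Λ Γ : KGraph k} {p : KGraph.Hom Γ Λ} (hp : KGraph.IsCovering p)

theorem exists_lift (hp : KGraph.IsCovering p) (α : Λ.E) (v : Γ.V)
    (h : Λ.s α = p.vmap v) :
    ∃! β : Γ.E, Γ.s β = v ∧ p.emap β = α := by
  obtain ⟨β, hβv, hβα⟩ := (hp.bij_s v).surjOn (a := α) h
  refine ⟨β, ⟨hβv, hβα⟩, ?_⟩
  rintro β' ⟨hβ'v, hβ'α⟩
  exact (hp.bij_s v).injOn hβ'v hβv (hβ'α.trans hβα.symm)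

noncomputable def lift (α : Λ.E) (v : Γ.V) (h : Λ.s α = p.vmap v) : Γ.E :=
  (exists_lift hp α v h).exists.choose

theorem lift_s (α : Λ.E) (v : Γ.V) (h : Λ.s α = p.vmap v) :
    Γ.s (lift hp α v h) = v :=
  (exists_lift hp α v h).exists.choose_spec.1

theorem lift_p (α : Λ.E) (v : Γ.V) (h : Λ.s α = p.vmap v) :
    p.emap (lift hp α v h) = α :=
  (exists_lift hp α v h).exists.choose_spec.2

theorem lift_unique {α : Λ.E} {v : Γ.V} (h : Λ.s α = p.vmap v) {β : Γ.E}
    (h1 : Γ.s β = v) (h2 : p.emap β = α) : β = lift hp α v h := by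
  obtain ⟨β₀, hβ₀, hu⟩ := exists_lift hp α v h
  rw [hu β ⟨h1, h2⟩, hu (lift hp α v h) ⟨lift_s hp α v h, lift_p hp α v h⟩]

theorem lift_d (α : Λ.E) (v : Γ.V) (h : Λ.s α = p.vmap v) :
    Γ.d (lift hp α v h) = Λ.d α := by
  rw [← p.map_d, lift_p]

theorem lift_r (α : Λ.E) (v : Γ.V) (h : Λ.s α = p.vmap v) :
    p.vmap (Γ.r (lift hp α v h)) = Λ.r α := by
  rw [← p.map_r, lift_p]

theorem lift_vcongr {α : Λ.E} {v v' : Γ.V} (hv : v = v') (h : Λ.s α = p.vmap v) :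
    lift hp α v h = lift hp α v' (hv ▸ h) := by subst hv; rfl

theorem s_eq_lift_r (α : Λ.E) (α' : Λ.E) (hc : Λ.s α = Λ.r α') (v : Γ.V)
    (h : Λ.s α' = p.vmap v) :
    Λ.s α = p.vmap (Γ.r (lift hp α' v h)) := by
  rw [lift_r]; exact hc

theorem lift_comp (α α' : Λ.E) (hc : Λ.s α = Λ.r α') (v : Γ.V)
    (h : Λ.s α' = p.vmap v) :
    lift hp (Λ.comp α α' hc) v (by rw [Λ.s_comp]; exact h) =
      Γ.comp (lift hp α (Γ.r (lift hp α' v h)) (s_eq_lift_r hp α α' hc v h))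
        (lift hp α' v h) (lift_s hp _ _ _) := by
  refine (lift_unique hp _ ?_ ?_).symm
  · rw [Γ.s_comp, lift_s]
  · rw [p.map_comp]
    exact comp_congr Λ (lift_p hp _ _ _) (lift_p hp _ _ _) _ hc

theorem lift_ident (v : Γ.V) (h : Λ.s (Λ.ident (p.vmap v)) = p.vmap v) :
    lift hp (Λ.ident (p.vmap v)) v h = Γ.ident v := by
  refine (lift_unique hp _ (Γ.s_ident v) ?_).symm
  rw [p.map_ident]

end Lifts

/-- The edges of the pullback `(k+1)`-graph. -/
inductive PE (Λ Γ : KGraph k) (m : ℕ) : Type where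
  | lam (α : Λ.E)
  | gam (β : Γ.E)
  | mix (β : Γ.E) (l : Fin m)

section Construction

variable {Λ Γ : KGraph k} {m : ℕ} {p : KGraph.Hom Γ Λ}

/-- encoding for countability -/
def PEenc : PE Λ Γ m → (Λ.E ⊕ Γ.E ⊕ Γ.E × Fin m)
  | .lam α => .inl α
  | .gam β => .inr (.inl β)
  | .mix β l => .inr (.inr (β, l))

theorem PEenc_inj : Function.Injective (PEenc (Λ := Λ) (Γ := Γ) (m := m)) := by
  intro x y h
  cases x <;> cases y <;> simp [PEenc] at h <;> simp_all

theorem countable_PE : Countable (PE Λ Γ m) := by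
  have := Λ.countable_E; have := Γ.countable_E
  exact PEenc_inj.countable

/-- range map -/
def PR (p : KGraph.Hom Γ Λ) : PE Λ Γ m → Λ.V ⊕ Γ.V
  | .lam α => .inl (Λ.r α)
  | .gam β => .inr (Γ.r β)
  | .mix β _ => .inl (p.vmap (Γ.r β))

/-- source map -/
def PS : PE Λ Γ m → Λ.V ⊕ Γ.V
  | .lam α => .inl (Λ.s α)
  | .gam β => .inr (Γ.s β)
  | .mix β _ => .inr (Γ.s β)

/-- degree map -/
def PD : PE Λ Γ m → Fin (k+1) → ℕ
  | .lam α => Fin.snoc (Λ.d α) 0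
  | .gam β => Fin.snoc (Γ.d β) 0
  | .mix β _ => Fin.snoc (Γ.d β) 1

/-- identities -/
def PI : Λ.V ⊕ Γ.V → PE Λ Γ m
  | .inl v => .lam (Λ.ident v)
  | .inr w => .gam (Γ.ident w)

variable (hp : KGraph.IsCovering p) (σ : Γ.E → Equiv.Perm (Fin m))

/-- composition -/
noncomputable def PC : (μ ν : PE Λ Γ m) → PS μ = PR p ν → PE Λ Γ m
  | .lam α, .lam α', h => .lam (Λ.comp α α' (Sum.inl.inj h))
  | .lam α, .mix β l, h =>
      .mix (Γ.comp (lift hp α (Γ.r β) (Sum.inl.inj h)) β (lift_s hp _ _ _))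
        (σ (lift hp α (Γ.r β) (Sum.inl.inj h)) l)
  | .gam β, .gam β', h => .gam (Γ.comp β β' (Sum.inr.inj h))
  | .mix β l, .gam β', h => .mix (Γ.comp β β' (Sum.inr.inj h)) l
  | .lam _, .gam _, h => nomatch h
  | .gam _, .lam _, h => nomatch h
  | .gam _, .mix _ _, h => nomatch h
  | .mix _ _, .lam _, h => nomatch h
  | .mix _ _, .mix _ _, h => nomatch h

theorem snoc_zero : (Fin.snoc (0 : Fin k → ℕ) 0 : Fin (k+1) → ℕ) = 0 := by
  funext i; refine Fin.lastCases ?_ ?_ i <;> simp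

theorem PX_factor (τ : PE Λ Γ m) (a b : Fin (k+1) → ℕ)
    (hab : PD τ = a + b) :
    ∃! μν : PE Λ Γ m × PE Λ Γ m, ∃ h : PS μν.1 = PR p μν.2,
      PD μν.1 = a ∧ PD μν.2 = b ∧ PC hp σ μν.1 μν.2 h = τ := by
  cases τ with
  | lam α =>
    have hlast : a (Fin.last k) + b (Fin.last k) = 0 := by
      have := congrFun hab (Fin.last k); simp [PD] at this; omega
    have ha : a (Fin.last k) = 0 := by omega
    have hb : b (Fin.last k) = 0 := by omega
    have hd : Λ.d α = Fin.init a + Fin.init b := by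
      funext i
      have := congrFun hab (Fin.castSucc i)
      simpa [PD, Fin.init] using this
    obtain ⟨⟨μ, ν⟩, ⟨hc, hdμ, hdν, hcomp⟩, huniq⟩ :=
      Λ.factor α (Fin.init a) (Fin.init b) hd
    refine ⟨(.lam μ, .lam ν), ⟨congrArg Sum.inl hc, ?_, ?_, ?_⟩, ?_⟩
    · show Fin.snoc (Λ.d μ) 0 = a
      rw [hdμ]; exact (eq_snoc_of_last_eq 0 ha).symm
    · show Fin.snoc (Λ.d ν) 0 = b
      rw [hdν]; exact (eq_snoc_of_last_eq 0 hb).symm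
    · exact congrArg PE.lam hcomp
    · rintro ⟨x, y⟩ ⟨hxy, hdx, hdy, hcxy⟩
      cases x with
      | lam μ' =>
        cases y with
        | lam ν' =>
          have h1 : Λ.d μ' = Fin.init a :=
            (snoc_inj (hdx.trans (eq_snoc_of_last_eq 0 ha))).1
          have h2 : Λ.d ν' = Fin.init b :=
            (snoc_inj (hdy.trans (eq_snoc_of_last_eq 0 hb))).1
          have h3 : Λ.comp μ' ν' (Sum.inl.inj hxy) = α := PE.lam.inj hcxy
          have h4 := huniq (μ', ν') ⟨Sum.inl.inj hxy, h1, h2, h3⟩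
          rw [show μ' = μ from congrArg Prod.fst h4,
            show ν' = ν from congrArg Prod.snd h4]
        | gam β' => exact nomatch hxy
        | mix β' l' => exact nomatch hcxy
      | gam β =>
        cases y with
        | lam ν' => exact nomatch hxy
        | gam β' => exact nomatch hcxy
        | mix β' l' => exact nomatch hxy
      | mix β' l' =>
        have := congrFun hdx (Fin.last k)
        simp [PD, ha] at this
  | gam β =>
    have hlast : a (Fin.last k) + b (Fin.last k) = 0 := by
      have := congrFun hab (Fin.last k); simp [PD] at this; omega
    have ha : a (Fin.last k) = 0 := by omega
    have hb : b (Fin.last k) = 0 := by omega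
    have hd : Γ.d β = Fin.init a + Fin.init b := by
      funext i
      have := congrFun hab (Fin.castSucc i)
      simpa [PD, Fin.init] using this
    obtain ⟨⟨μ, ν⟩, ⟨hc, hdμ, hdν, hcomp⟩, huniq⟩ :=
      Γ.factor β (Fin.init a) (Fin.init b) hd
    refine ⟨(.gam μ, .gam ν), ⟨congrArg Sum.inr hc, ?_, ?_, ?_⟩, ?_⟩
    · show Fin.snoc (Γ.d μ) 0 = a
      rw [hdμ]; exact (eq_snoc_of_last_eq 0 ha).symm
    · show Fin.snoc (Γ.d ν) 0 = b
      rw [hdν]; exact (eq_snoc_of_last_eq 0 hb).symm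
    · exact congrArg PE.gam hcomp
    · rintro ⟨x, y⟩ ⟨hxy, hdx, hdy, hcxy⟩
      cases x with
      | lam μ' =>
        cases y with
        | lam ν' => exact nomatch hcxy
        | gam β' => exact nomatch hxy
        | mix β' l' => exact nomatch hcxy
      | gam β₁ =>
        cases y with
        | lam ν' => exact nomatch hxy
        | gam β₂ =>
          have h1 : Γ.d β₁ = Fin.init a :=
            (snoc_inj (hdx.trans (eq_snoc_of_last_eq 0 ha))).1
          have h2 : Γ.d β₂ = Fin.init b :=
            (snoc_inj (hdy.trans (eq_snoc_of_last_eq 0 hb))).1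
          have h3 : Γ.comp β₁ β₂ (Sum.inr.inj hxy) = β := PE.gam.inj hcxy
          have h4 := huniq (β₁, β₂) ⟨Sum.inr.inj hxy, h1, h2, h3⟩
          rw [show β₁ = μ from congrArg Prod.fst h4,
            show β₂ = ν from congrArg Prod.snd h4]
        | mix β' l' => exact nomatch hxy
      | mix β' l' =>
        have := congrFun hdx (Fin.last k)
        simp [PD, ha] at this
  | mix β l =>
    have hlast : a (Fin.last k) + b (Fin.last k) = 1 := by
      have := congrFun hab (Fin.last k); simp [PD] at this; omega
    have hd : Γ.d β = Fin.init a + Fin.init b := by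
      funext i
      have := congrFun hab (Fin.castSucc i)
      simpa [PD, Fin.init] using this
    obtain ⟨⟨β₁, β₂⟩, ⟨hc, hd₁, hd₂, hcomp⟩, huniq⟩ :=
      Γ.factor β (Fin.init a) (Fin.init b) hd
    have h01 : (a (Fin.last k) = 0 ∧ b (Fin.last k) = 1) ∨
        (a (Fin.last k) = 1 ∧ b (Fin.last k) = 0) := by omega
    rcases h01 with ⟨ha, hb⟩ | ⟨ha, hb⟩
    · -- the first factor lives in `Λ`
      have hcl : PS (.lam (p.emap β₁) : PE Λ Γ m) = PR p (.mix β₂ ((σ β₁)⁻¹ l) : PE Λ Γ m) := by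
        show Sum.inl (Λ.s (p.emap β₁)) = Sum.inl (p.vmap (Γ.r β₂))
        rw [p.map_s, hc]
      have hL : β₁ = lift hp (p.emap β₁) (Γ.r β₂) (Sum.inl.inj hcl) :=
        lift_unique hp _ hc rfl
      refine ⟨(.lam (p.emap β₁), .mix β₂ ((σ β₁)⁻¹ l)), ⟨hcl, ?_, ?_, ?_⟩, ?_⟩
      · show Fin.snoc (Λ.d (p.emap β₁)) 0 = a
        rw [p.map_d, hd₁]; exact (eq_snoc_of_last_eq 0 ha).symm
      · show Fin.snoc (Γ.d β₂) 1 = b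
        rw [hd₂]; exact (eq_snoc_of_last_eq 1 hb).symm
      · have e1 : Γ.comp (lift hp (p.emap β₁) (Γ.r β₂) (Sum.inl.inj hcl)) β₂
            (lift_s hp _ _ _) = β := (comp_congr Γ hL.symm rfl _ hc).trans hcomp
        have e2 : σ (lift hp (p.emap β₁) (Γ.r β₂) (Sum.inl.inj hcl)) ((σ β₁)⁻¹ l) = l := by
          rw [← hL]; exact Equiv.apply_symm_apply _ _
        exact congrArg₂ PE.mix e1 e2
      · rintro ⟨x, y⟩ ⟨hxy, hdx, hdy, hcxy⟩
        cases x with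
        | lam α' =>
          cases y with
          | lam ν' => exact nomatch hcxy
          | gam β' => exact nomatch hxy
          | mix β₂' l₂' =>
            obtain ⟨hcβ, hcl'⟩ := PE.mix.inj hcxy
            have hdL : Γ.d (lift hp α' (Γ.r β₂') (Sum.inl.inj hxy)) = Fin.init a := by
              rw [lift_d]
              exact (snoc_inj (hdx.trans (eq_snoc_of_last_eq 0 ha))).1
            have hdβ₂' : Γ.d β₂' = Fin.init b :=
              (snoc_inj (hdy.trans (eq_snoc_of_last_eq 1 hb))).1
            have h4 := huniq (lift hp α' (Γ.r β₂') (Sum.inl.inj hxy), β₂')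
              ⟨lift_s hp _ _ (Sum.inl.inj hxy), hdL, hdβ₂', hcβ⟩
            have hL1 : lift hp α' (Γ.r β₂') (Sum.inl.inj hxy) = β₁ :=
              congrArg Prod.fst h4
            have hB2 : β₂' = β₂ := congrArg Prod.snd h4
            have hα' : α' = p.emap β₁ := by
              rw [← hL1]; exact (lift_p hp _ _ _).symm
            have hl₂' : l₂' = (σ β₁)⁻¹ l := by
              rw [← hL1, ← hcl']; simp
            rw [hα', hB2, hl₂']
        | gam β' =>
          cases y with
          | lam ν' => exact nomatch hxy
          | gam β'' => exact nomatch hcxy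
          | mix β'' l'' => exact nomatch hxy
        | mix β₁' l₁' =>
          have := congrFun hdx (Fin.last k)
          simp [PD, ha] at this
    · -- the first factor lives in `Γ` (with the label `l`)
      refine ⟨(.mix β₁ l, .gam β₂), ⟨congrArg Sum.inr hc, ?_, ?_, ?_⟩, ?_⟩
      · show Fin.snoc (Γ.d β₁) 1 = a
        rw [hd₁]; exact (eq_snoc_of_last_eq 1 ha).symm
      · show Fin.snoc (Γ.d β₂) 0 = b
        rw [hd₂]; exact (eq_snoc_of_last_eq 0 hb).symm
      · exact congrArg₂ PE.mix hcomp rfl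
      · rintro ⟨x, y⟩ ⟨hxy, hdx, hdy, hcxy⟩
        cases x with
        | lam α' =>
          cases y with
          | lam ν' => exact nomatch hcxy
          | gam β' => exact nomatch hxy
          | mix β₂' l₂' =>
            have := congrFun hdx (Fin.last k)
            simp [PD, ha] at this
        | gam β' =>
          cases y with
          | lam ν' => exact nomatch hxy
          | gam β'' => exact nomatch hcxy
          | mix β'' l'' => exact nomatch hxy
        | mix β₁' l₁' =>
          cases y with
          | lam ν' => exact nomatch hxy
          | gam β₂' =>
            obtain ⟨hcβ, hcl'⟩ := PE.mix.inj hcxy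
            have h1 : Γ.d β₁' = Fin.init a :=
              (snoc_inj (hdx.trans (eq_snoc_of_last_eq 1 ha))).1
            have h2 : Γ.d β₂' = Fin.init b :=
              (snoc_inj (hdy.trans (eq_snoc_of_last_eq 0 hb))).1
            have h4 := huniq (β₁', β₂') ⟨Sum.inr.inj hxy, h1, h2, hcβ⟩
            rw [show β₁' = β₁ from congrArg Prod.fst h4,
              show β₂' = β₂ from congrArg Prod.snd h4, hcl']
          | mix β'' l'' => exact nomatch hxy

variable (hσ : KGraph.IsCocycle σ)

theorem sigma_ident (hσ : KGraph.IsCocycle σ) (w : Γ.V) : σ (Γ.ident w) = 1 := by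
  have h := hσ (Γ.ident w) (Γ.ident w) (by rw [Γ.s_ident, Γ.r_ident])
  rw [Γ.ident_comp] at h
  have : σ (Γ.ident w) * 1 = σ (Γ.ident w) * σ (Γ.ident w) := by
    rw [mul_one]; exact h
  exact (mul_left_cancel this).symm

/-- The pullback `(k+1)`-graph `Λ ×_{p,𝔰} Γ`. -/
noncomputable def PX : KGraph (k + 1) where
  V := Λ.V ⊕ Γ.V
  E := PE Λ Γ m
  countable_V := by have := Λ.countable_V; have := Γ.countable_V; infer_instance
  countable_E := countable_PE
  r := PR p
  s := PS
  ident := PI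
  comp := PC hp σ
  d := PD
  r_ident := by
    rintro (v | w)
    · show Sum.inl (Λ.r (Λ.ident v)) = _; rw [Λ.r_ident]
    · show Sum.inr (Γ.r (Γ.ident w)) = _; rw [Γ.r_ident]
  s_ident := by
    rintro (v | w)
    · show Sum.inl (Λ.s (Λ.ident v)) = _; rw [Λ.s_ident]
    · show Sum.inr (Γ.s (Γ.ident w)) = _; rw [Γ.s_ident]
  r_comp := by
    intro μ ν h
    cases μ with
    | lam α =>
      cases ν with
      | lam α' => show Sum.inl (Λ.r (Λ.comp _ _ _)) = _; rw [Λ.r_comp]; rfl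
      | gam β => exact nomatch h
      | mix β l =>
        show Sum.inl (p.vmap (Γ.r (Γ.comp _ _ _))) = Sum.inl (Λ.r α)
        rw [Γ.r_comp, lift_r]
    | gam β =>
      cases ν with
      | lam α' => exact nomatch h
      | gam β' => show Sum.inr (Γ.r (Γ.comp _ _ _)) = _; rw [Γ.r_comp]; rfl
      | mix β' l => exact nomatch h
    | mix β l =>
      cases ν with
      | lam α' => exact nomatch h
      | gam β' =>
        show Sum.inl (p.vmap (Γ.r (Γ.comp _ _ _))) = _
        rw [Γ.r_comp]; rfl
      | mix β' l' => exact nomatch h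
  s_comp := by
    intro μ ν h
    cases μ with
    | lam α =>
      cases ν with
      | lam α' => show Sum.inl (Λ.s (Λ.comp _ _ _)) = _; rw [Λ.s_comp]; rfl
      | gam β => exact nomatch h
      | mix β l =>
        show Sum.inr (Γ.s (Γ.comp _ _ _)) = _
        rw [Γ.s_comp]; rfl
    | gam β =>
      cases ν with
      | lam α' => exact nomatch h
      | gam β' => show Sum.inr (Γ.s (Γ.comp _ _ _)) = _; rw [Γ.s_comp]; rfl
      | mix β' l => exact nomatch h
    | mix β l =>
      cases ν with
      | lam α' => exact nomatch h
      | gam β' => show Sum.inr (Γ.s (Γ.comp _ _ _)) = _; rw [Γ.s_comp]; rfl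
      | mix β' l' => exact nomatch h
  ident_comp := by
    rintro (v | w) ν h
    · cases ν with
      | lam α' => exact congrArg PE.lam (Λ.ident_comp _ _ _)
      | gam β => exact nomatch h
      | mix β l =>
        have hv : v = p.vmap (Γ.r β) := by
          have := Sum.inl.inj h
          rwa [Λ.s_ident] at this
        subst hv
        have hlift : lift hp (Λ.ident (p.vmap (Γ.r β))) (Γ.r β) (Sum.inl.inj h) =
            Γ.ident (Γ.r β) := lift_ident hp _ _
        have e1 : Γ.comp (lift hp (Λ.ident (p.vmap (Γ.r β))) (Γ.r β) (Sum.inl.inj h)) β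
            (lift_s hp _ _ _) = β :=
          (comp_congr Γ hlift rfl _ (by rw [Γ.s_ident])).trans (Γ.ident_comp _ _ _)
        have e2 : σ (lift hp (Λ.ident (p.vmap (Γ.r β))) (Γ.r β) (Sum.inl.inj h)) l = l := by
          rw [hlift, sigma_ident σ hσ]; rfl
        exact congrArg₂ PE.mix e1 e2
    · cases ν with
      | lam α' => exact nomatch h
      | gam β' => exact congrArg PE.gam (Γ.ident_comp _ _ _)
      | mix β l => exact nomatch h
  comp_ident := by
    rintro μ (v | w) h
    · cases μ with
      | lam α => exact congrArg PE.lam (Λ.comp_ident _ _ _)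
      | gam β => exact nomatch h
      | mix β l => exact nomatch h
    · cases μ with
      | lam α => exact nomatch h
      | gam β => exact congrArg PE.gam (Γ.comp_ident _ _ _)
      | mix β l => exact congrArg₂ PE.mix (Γ.comp_ident _ _ _) rfl
  d_ident := by
    rintro (v | w)
    · show (Fin.snoc (Λ.d (Λ.ident v)) 0 : Fin (k+1) → ℕ) = 0
      rw [Λ.d_ident, snoc_zero]
    · show (Fin.snoc (Γ.d (Γ.ident w)) 0 : Fin (k+1) → ℕ) = 0
      rw [Γ.d_ident, snoc_zero]
  d_comp := by
    intro μ ν h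
    cases μ with
    | lam α =>
      cases ν with
      | lam α' =>
        show (Fin.snoc (Λ.d (Λ.comp _ _ _)) 0 : Fin (k+1) → ℕ) = _
        rw [Λ.d_comp]; exact (snoc_add (Λ.d α) (Λ.d α') 0 0).symm
      | gam β => exact nomatch h
      | mix β l =>
        show (Fin.snoc (Γ.d (Γ.comp _ _ _)) 1 : Fin (k+1) → ℕ) = _
        rw [Γ.d_comp, lift_d hp]
        exact (snoc_add (Λ.d α) (Γ.d β) 0 1).symm
    | gam β =>
      cases ν with
      | lam α' => exact nomatch h
      | gam β' =>
        show (Fin.snoc (Γ.d (Γ.comp _ _ _)) 0 : Fin (k+1) → ℕ) = _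
        rw [Γ.d_comp]; exact (snoc_add (Γ.d β) (Γ.d β') 0 0).symm
      | mix β' l => exact nomatch h
    | mix β l =>
      cases ν with
      | lam α' => exact nomatch h
      | gam β' =>
        show (Fin.snoc (Γ.d (Γ.comp _ _ _)) 1 : Fin (k+1) → ℕ) = _
        rw [Γ.d_comp]; exact (snoc_add (Γ.d β) (Γ.d β') 1 0).symm
      | mix β' l' => exact nomatch h
  comp_assoc := by
    intro μ ν ρ h₁ h₂
    cases μ with
    | lam α =>
      cases ν with
      | lam α' =>
        cases ρ with
        | lam α'' =>
          exact congrArg PE.lam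
            (Λ.comp_assoc α α' α'' (Sum.inl.inj h₁) (Sum.inl.inj h₂))
        | gam β => exact nomatch h₂
        | mix β l =>
          -- `(α α')·(β,l) = α·(α'·(β,l))`
          have hcΛ : Λ.s α = Λ.r α' := Sum.inl.inj h₁
          have hv' : Λ.s α' = p.vmap (Γ.r β) := Sum.inl.inj h₂
          have e1 : Γ.comp
              (lift hp (Λ.comp α α' hcΛ) (Γ.r β) (by rw [Λ.s_comp]; exact hv')) β
              (lift_s hp _ _ _) =
              Γ.comp
                (lift hp α (Γ.r (Γ.comp (lift hp α' (Γ.r β) hv') β (lift_s hp _ _ _)))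
                  (by rw [Γ.r_comp, lift_r]; exact hcΛ))
                (Γ.comp (lift hp α' (Γ.r β) hv') β (lift_s hp _ _ _))
                (by rw [lift_s]) := by
            refine (comp_congr Γ (lift_comp hp α α' hcΛ (Γ.r β) hv') rfl _
              (by rw [Γ.s_comp, lift_s])).trans ?_
            rw [Γ.comp_assoc]
            exact comp_congr Γ
              (lift_vcongr hp (Γ.r_comp _ _ _).symm _) rfl _ _
          have e2 : σ (lift hp (Λ.comp α α' hcΛ) (Γ.r β) (by rw [Λ.s_comp]; exact hv')) l =
              σ (lift hp α (Γ.r (Γ.comp (lift hp α' (Γ.r β) hv') β (lift_s hp _ _ _)))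
                  (by rw [Γ.r_comp, lift_r]; exact hcΛ))
                (σ (lift hp α' (Γ.r β) hv') l) := by
            rw [lift_comp hp α α' hcΛ (Γ.r β) hv', hσ, Equiv.Perm.mul_apply]
            rw [lift_vcongr hp (Γ.r_comp _ _ _).symm]
          exact congrArg₂ PE.mix e1 e2
      | gam β =>
        cases ρ with
        | lam α'' => exact nomatch h₁
        | gam β' => exact nomatch h₁
        | mix β' l => exact nomatch h₁
      | mix β l =>
        cases ρ with
        | lam α'' => exact nomatch h₂
        | gam β'' =>
          -- `(α·(β,l))·β'' = α·((β,l)·β'')`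
          have hv : Λ.s α = p.vmap (Γ.r β) := Sum.inl.inj h₁
          have hcΓ : Γ.s β = Γ.r β'' := Sum.inr.inj h₂
          have e1 : Γ.comp (Γ.comp (lift hp α (Γ.r β) hv) β (lift_s hp _ _ _)) β''
              (by rw [Γ.s_comp]; exact hcΓ) =
              Γ.comp (lift hp α (Γ.r (Γ.comp β β'' hcΓ))
                  (by rw [Γ.r_comp]; exact hv))
                (Γ.comp β β'' hcΓ) (by rw [lift_s]) := by
            rw [Γ.comp_assoc]
            exact comp_congr Γ
              (lift_vcongr hp (Γ.r_comp _ _ _).symm _) rfl _ _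
          have e2 : σ (lift hp α (Γ.r β) hv) l =
              σ (lift hp α (Γ.r (Γ.comp β β'' hcΓ)) (by rw [Γ.r_comp]; exact hv)) l := by
            rw [lift_vcongr hp (Γ.r_comp _ _ _).symm]
          exact congrArg₂ PE.mix e1 e2
        | mix β'' l'' => exact nomatch h₂
    | gam β =>
      cases ν with
      | lam α' => exact nomatch h₁
      | gam β' =>
        cases ρ with
        | lam α'' => exact nomatch h₂
        | gam β'' =>
          exact congrArg PE.gam
            (Γ.comp_assoc β β' β'' (Sum.inr.inj h₁) (Sum.inr.inj h₂))
        | mix β'' l => exact nomatch h₂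
      | mix β' l => exact nomatch h₁
    | mix β l =>
      cases ν with
      | lam α' => exact nomatch h₁
      | gam β' =>
        cases ρ with
        | lam α'' => exact nomatch h₂
        | gam β'' =>
          exact congrArg (fun x => PE.mix x l)
            (Γ.comp_assoc β β' β'' (Sum.inr.inj h₁) (Sum.inr.inj h₂))
        | mix β'' l'' => exact nomatch h₂
      | mix β' l' => exact nomatch h₁
  factor := PX_factor hp σ

/-- the inclusion of `Λ` -/
noncomputable def Piota : LiftHom Λ (PX hp σ hσ) where
  vmap := Sum.inl
  emap := PE.lam
  map_r _ := rfl
  map_s _ := rfl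
  map_ident _ := rfl
  map_comp _ _ _ := rfl
  map_d _ := rfl

/-- the inclusion of `Γ` -/
noncomputable def Pj : LiftHom Γ (PX hp σ hσ) where
  vmap := Sum.inr
  emap := PE.gam
  map_r _ := rfl
  map_s _ := rfl
  map_ident _ := rfl
  map_comp _ _ _ := rfl
  map_d _ := rfl

/-- the connecting edges -/
def Pe : Γ.V × Fin m → PE Λ Γ m := fun vl => .mix (Γ.ident vl.1) vl.2

theorem PX_prop : CoveringSystemGraphProp Λ Γ p m σ (PX hp σ hσ)
    (Piota hp σ hσ) (Pj hp σ hσ) Pe := by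
  refine ⟨fun a b h => Sum.inl.inj h, fun a b h => PE.lam.inj h,
    fun a b h => Sum.inr.inj h, fun a b h => PE.gam.inj h, ?_, ?_, ?_, ?_, ?_, ?_⟩
  · ext τ
    simp only [Set.mem_inter_iff, Set.mem_range, Set.mem_empty_iff_false, iff_false]
    rintro ⟨⟨a, ha⟩, ⟨b, hb⟩⟩
    rw [← hb] at ha
    exact nomatch ha
  · ext τ
    simp only [Set.mem_union, Set.mem_range, Set.mem_setOf_eq]
    constructor
    · rintro (⟨a, rfl⟩ | ⟨b, rfl⟩)
      · show (Fin.snoc (Λ.d a) 0 : Fin (k+1) → ℕ) (Fin.last k) = 0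
        rw [Fin.snoc_last]
      · show (Fin.snoc (Γ.d b) 0 : Fin (k+1) → ℕ) (Fin.last k) = 0
        rw [Fin.snoc_last]
    · intro hτ
      cases τ with
      | lam α => exact Or.inl ⟨α, rfl⟩
      | gam β => exact Or.inr ⟨β, rfl⟩
      | mix β l =>
        exfalso
        have : (Fin.snoc (Γ.d β) 1 : Fin (k+1) → ℕ) (Fin.last k) = 0 := hτ
        rw [Fin.snoc_last] at this
        exact one_ne_zero this
  · rintro ⟨v, l⟩ ⟨v', l'⟩ h
    obtain ⟨h1, h2⟩ := PE.mix.inj h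
    exact Prod.ext (ident_injective Γ h1) h2
  · ext τ
    simp only [Set.mem_range, Set.mem_setOf_eq]
    constructor
    · rintro ⟨⟨v, l⟩, rfl⟩
      show (Fin.snoc (Γ.d (Γ.ident v)) 1 : Fin (k+1) → ℕ) = _
      rw [Γ.d_ident, snoc_single_last]
    · intro hτ
      cases τ with
      | lam α =>
        exfalso
        have := congrFun (show (Fin.snoc (Λ.d α) 0 : Fin (k+1) → ℕ) =
          Pi.single (Fin.last k) 1 from hτ) (Fin.last k)
        rw [Fin.snoc_last, Pi.single_eq_same] at this
        exact zero_ne_one this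
      | gam β =>
        exfalso
        have := congrFun (show (Fin.snoc (Γ.d β) 0 : Fin (k+1) → ℕ) =
          Pi.single (Fin.last k) 1 from hτ) (Fin.last k)
        rw [Fin.snoc_last, Pi.single_eq_same] at this
        exact zero_ne_one this
      | mix β l =>
        have hβ : Γ.d β = 0 := by
          have : (Fin.snoc (Γ.d β) 1 : Fin (k+1) → ℕ) =
              Fin.snoc (0 : Fin k → ℕ) 1 := by
            rw [snoc_single_last]; exact hτ
          exact (snoc_inj this).1
        refine ⟨(Γ.r β, l), ?_⟩
        show PE.mix (Γ.ident (Γ.r β)) l = PE.mix β l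
        rw [← eq_ident_of_d_eq_zero Γ hβ]
  · intro v l
    constructor
    · show Sum.inr (Γ.s (Γ.ident v)) = Sum.inr v
      rw [Γ.s_ident]
    · show Sum.inl (p.vmap (Γ.r (Γ.ident v))) = Sum.inl (p.vmap v)
      rw [Γ.r_ident]
  · intro lam l h₁ h₂
    have e1 : Γ.comp (Γ.ident (Γ.r lam)) lam (by rw [Γ.s_ident]) = lam :=
      Γ.ident_comp _ _ _
    have hLs : Γ.s lam = Γ.r (Γ.ident (Γ.s lam)) := (Γ.r_ident _).symm
    have hL : lam = lift hp (p.emap lam) (Γ.r (Γ.ident (Γ.s lam)))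
        (Sum.inl.inj h₂) := lift_unique hp _ hLs rfl
    have e2 : Γ.comp (lift hp (p.emap lam) (Γ.r (Γ.ident (Γ.s lam))) (Sum.inl.inj h₂))
        (Γ.ident (Γ.s lam)) (by rw [lift_s]) = lam :=
      (comp_congr Γ hL.symm rfl _ hLs).trans (Γ.comp_ident _ _ _)
    have e3 : σ (lift hp (p.emap lam) (Γ.r (Γ.ident (Γ.s lam))) (Sum.inl.inj h₂))
        ((σ lam)⁻¹ l) = l := by
      rw [← hL]; exact Equiv.apply_symm_apply _ _
    exact (congrArg₂ PE.mix e1 rfl).trans (congrArg₂ PE.mix e2 e3).symm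

end Construction

section Abstract

variable {Λ Γ : KGraph k} {p : KGraph.Hom Γ Λ} {m : ℕ}
  {σ : Γ.E → Equiv.Perm (Fin m)} {X' : KGraph (k+1)} {ι' : LiftHom Λ X'}
  {j' : LiftHom Γ X'} {e' : Γ.V × Fin m → X'.E}
  (hP : CoveringSystemGraphProp Λ Γ p m σ X' ι' j' e')

include hP

theorem vertex_disjoint (v : Λ.V) (w : Γ.V) : ι'.vmap v ≠ j'.vmap w := by
  intro h
  have hmem : ι'.emap (Λ.ident v) ∈ Set.range ι'.emap ∩ Set.range j'.emap := by
    refine ⟨Set.mem_range_self _, ⟨Γ.ident w, ?_⟩⟩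
    rw [ι'.map_ident, j'.map_ident, h]
  rw [hP.2.2.2.2.1] at hmem
  exact hmem

theorem e'_deg (v : Γ.V) (l : Fin m) :
    X'.d (e' (v, l)) = Pi.single (Fin.last k) 1 := by
  have : e' (v, l) ∈ Set.range e' := Set.mem_range_self _
  rw [hP.2.2.2.2.2.2.2.1] at this
  exact this

theorem deg_zero_cases {τ : X'.E} (h : X'.d τ (Fin.last k) = 0) :
    (∃ α, τ = ι'.emap α) ∨ ∃ β, τ = j'.emap β := by
  have : τ ∈ Set.range ι'.emap ∪ Set.range j'.emap := by
    rw [hP.2.2.2.2.2.1]; exact h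
  rcases this with ⟨α, hα⟩ | ⟨β, hβ⟩
  · exact Or.inl ⟨α, hα.symm⟩
  · exact Or.inr ⟨β, hβ.symm⟩

theorem vertex_cases (v : X'.V) : (∃ u, v = ι'.vmap u) ∨ ∃ w, v = j'.vmap w := by
  have h0 : X'.d (X'.ident v) (Fin.last k) = 0 := by rw [X'.d_ident]; rfl
  rcases deg_zero_cases hP h0 with ⟨α, hα⟩ | ⟨β, hβ⟩
  · left
    refine ⟨Λ.r α, ?_⟩
    rw [← X'.r_ident v, hα, ι'.map_r]
  · right
    refine ⟨Γ.r β, ?_⟩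
    rw [← X'.r_ident v, hβ, j'.map_r]

theorem deg_one_decomp {τ : X'.E} (hq : X'.d τ (Fin.last k) ≥ 1) :
    ∃ (β : Γ.E) (l : Fin m) (hc : X'.s (e' (Γ.r β, l)) = X'.r (j'.emap β)),
      τ = X'.comp (e' (Γ.r β, l)) (j'.emap β) hc := by
  obtain ⟨hιv, hιe, hjv, hje, hdisj, hunion, hei, her, hse, hrel⟩ := hP
  have hfac : X'.d τ = Pi.single (Fin.last k) 1 +
      fun i => X'.d τ i - (Pi.single (Fin.last k) 1 : Fin (k+1) → ℕ) i := by
    funext i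
    simp only [Pi.add_apply]
    rcases eq_or_ne i (Fin.last k) with rfl | hi
    · rw [Pi.single_eq_same]; omega
    · rw [Pi.single_eq_of_ne hi]; omega
  obtain ⟨⟨μ, ν⟩, ⟨hc, hdμ, hdν, hcomp⟩, _⟩ := X'.factor τ _ _ hfac
  have hμe : μ ∈ Set.range e' := by rw [her]; exact hdμ
  obtain ⟨⟨v, l⟩, hvl⟩ := hμe
  have hsν : X'.r ν = j'.vmap v := by
    rw [← hc, ← hvl]; exact (hse v l).1
  have hν0 : X'.d ν (Fin.last k) = 0 := by
    by_contra h0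
    have h1 : X'.d ν (Fin.last k) ≥ 1 := by omega
    have hfac2 : X'.d ν = Pi.single (Fin.last k) 1 +
        fun i => X'.d ν i - (Pi.single (Fin.last k) 1 : Fin (k+1) → ℕ) i := by
      funext i
      simp only [Pi.add_apply]
      rcases eq_or_ne i (Fin.last k) with rfl | hi
      · rw [Pi.single_eq_same]; omega
      · rw [Pi.single_eq_of_ne hi]; omega
    obtain ⟨⟨μ', ν'⟩, ⟨hc', hdμ', _, hcomp'⟩, _⟩ := X'.factor ν _ _ hfac2
    have hμ'e : μ' ∈ Set.range e' := by rw [her]; exact hdμ'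
    obtain ⟨⟨w, l'⟩, hwl⟩ := hμ'e
    have : X'.r ν = ι'.vmap (p.vmap w) := by
      rw [← hcomp', X'.r_comp, ← hwl]; exact (hse w l').2
    rw [hsν] at this
    exact vertex_disjoint
      ⟨hιv, hιe, hjv, hje, hdisj, hunion, hei, her, hse, hrel⟩ _ _ this.symm
  rcases deg_zero_cases
      ⟨hιv, hιe, hjv, hje, hdisj, hunion, hei, her, hse, hrel⟩ hν0 with
    ⟨α, hα⟩ | ⟨β, hβ⟩
  · exfalso
    have : ι'.vmap (Λ.r α) = j'.vmap v := by
      rw [← ι'.map_r, ← hα, hsν]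
    exact vertex_disjoint
      ⟨hιv, hιe, hjv, hje, hdisj, hunion, hei, her, hse, hrel⟩ _ _ this
  · have hv : v = Γ.r β := by
      apply hjv
      rw [← hsν, hβ, j'.map_r]
    subst hv
    refine ⟨β, l, ?_, ?_⟩
    · rw [(hse (Γ.r β) l).1, j'.map_r]
    · rw [← hcomp]
      exact comp_congr X' hvl.symm hβ _ _

theorem deg_last_le_one (τ : X'.E) : X'.d τ (Fin.last k) ≤ 1 := by
  by_contra h0
  have h1 : X'.d τ (Fin.last k) ≥ 1 := by omega
  obtain ⟨β, l, hc, rfl⟩ := deg_one_decomp hP h1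
  have : X'.d (X'.comp (e' (Γ.r β, l)) (j'.emap β) hc) (Fin.last k) = 1 := by
    rw [X'.d_comp]
    have := congrFun (congrArg₂ (· + ·) (e'_deg hP (Γ.r β) l) (j'.map_d β))
      (Fin.last k)
    simp only [Pi.add_apply] at this ⊢
    rw [this, Pi.single_eq_same, Fin.snoc_last]
  omega

variable (hp : KGraph.IsCovering p) (hσ : KGraph.IsCocycle σ)

theorem key (L β : Γ.E) (hLs : Γ.s L = Γ.r β) (l : Fin m)
    (h1 : X'.s (e' (Γ.r (Γ.comp L β hLs), σ L l)) = X'.r (j'.emap (Γ.comp L β hLs)))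
    (hc : X'.s (e' (Γ.r β, l)) = X'.r (j'.emap β))
    (h2 : X'.s (ι'.emap (p.emap L)) = X'.r (X'.comp (e' (Γ.r β, l)) (j'.emap β) hc)) :
    X'.comp (e' (Γ.r (Γ.comp L β hLs), σ L l)) (j'.emap (Γ.comp L β hLs)) h1 =
      X'.comp (ι'.emap (p.emap L)) (X'.comp (e' (Γ.r β, l)) (j'.emap β) hc) h2 := by
  obtain ⟨hιv, hιe, hjv, hje, hdisj, hunion, hei, her, hse, hrel⟩ := hP
  have hjc : X'.s (j'.emap L) = X'.r (j'.emap β) := by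
    rw [j'.map_s, j'.map_r, hLs]
  have hB : X'.s (e' (Γ.r L, σ L l)) = X'.r (j'.emap L) := by
    rw [(hse _ _).1, j'.map_r]
  have hA : X'.s (e' (Γ.r L, σ L l)) = X'.r (X'.comp (j'.emap L) (j'.emap β) hjc) := by
    rw [(hse _ _).1, X'.r_comp, j'.map_r]
  have hC : X'.s (ι'.emap (p.emap L)) = X'.r (e' (Γ.s L, (σ L)⁻¹ (σ L l))) := by
    rw [ι'.map_s, (hse _ _).2, p.map_s]
  have hC' : X'.s (ι'.emap (p.emap L)) = X'.r (e' (Γ.r β, l)) := by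
    rw [ι'.map_s, (hse _ _).2, p.map_s, hLs]
  have hpair : (Γ.s L, (σ L)⁻¹ (σ L l)) = (Γ.r β, l) := by
    rw [hLs, Equiv.Perm.inv_def, Equiv.symm_apply_apply]
  calc X'.comp (e' (Γ.r (Γ.comp L β hLs), σ L l)) (j'.emap (Γ.comp L β hLs)) h1
      = X'.comp (e' (Γ.r L, σ L l)) (X'.comp (j'.emap L) (j'.emap β) hjc) hA :=
        comp_congr X' (congrArg (fun w => e' (w, σ L l)) (Γ.r_comp L β hLs))
          (j'.map_comp L β hLs) h1 hA
    _ = X'.comp (X'.comp (e' (Γ.r L, σ L l)) (j'.emap L) hB) (j'.emap β)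
          (by rw [X'.s_comp, hjc]) :=
        (X'.comp_assoc _ _ _ hB hjc).symm
    _ = X'.comp (X'.comp (ι'.emap (p.emap L)) (e' (Γ.s L, (σ L)⁻¹ (σ L l))) hC)
          (j'.emap β) (by rw [X'.s_comp, (hse _ _).1, j'.map_r, hLs]) :=
        comp_congr X' (hrel L (σ L l) hB hC) rfl _ _
    _ = X'.comp (X'.comp (ι'.emap (p.emap L)) (e' (Γ.r β, l)) hC') (j'.emap β)
          (by rw [X'.s_comp, (hse _ _).1, j'.map_r]) :=
        comp_congr X' (comp_congr X' rfl (congrArg e' hpair) hC hC') rfl _ _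
    _ = X'.comp (ι'.emap (p.emap L))
          (X'.comp (e' (Γ.r β, l)) (j'.emap β) (by rw [(hse _ _).1, j'.map_r]))
          (by rw [X'.r_comp]; exact hC') :=
        X'.comp_assoc _ _ _ _ _
    _ = X'.comp (ι'.emap (p.emap L)) (X'.comp (e' (Γ.r β, l)) (j'.emap β) hc) h2 :=
        rfl

/-- the edge part of the comparison functor -/
noncomputable def PFemap : PE Λ Γ m → X'.E := fun τ =>
  match τ with
  | .lam α => ι'.emap α
  | .gam β => j'.emap β
  | .mix β l => X'.comp (e' (Γ.r β, l)) (j'.emap β)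
      (by rw [(hP.2.2.2.2.2.2.2.2.1 (Γ.r β) l).1, j'.map_r])

/-- the comparison functor -/
noncomputable def PF : KGraph.Hom (PX hp σ hσ) X' where
  vmap := Sum.elim ι'.vmap j'.vmap
  emap := PFemap hP
  map_r := by
    intro τ
    cases τ with
    | lam α => exact ι'.map_r α
    | gam β => exact j'.map_r β
    | mix β l =>
      show X'.r (X'.comp _ _ _) = ι'.vmap (p.vmap (Γ.r β))
      rw [X'.r_comp, (hP.2.2.2.2.2.2.2.2.1 (Γ.r β) l).2]
  map_s := by
    intro τ
    cases τ with
    | lam α => exact ι'.map_s α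
    | gam β => exact j'.map_s β
    | mix β l =>
      show X'.s (X'.comp _ _ _) = j'.vmap (Γ.s β)
      rw [X'.s_comp, j'.map_s]
  map_ident := by
    rintro (u | w)
    · exact ι'.map_ident u
    · exact j'.map_ident w
  map_d := by
    intro τ
    cases τ with
    | lam α => exact ι'.map_d α
    | gam β => exact j'.map_d β
    | mix β l =>
      show X'.d (X'.comp _ _ _) = (Fin.snoc (Γ.d β) 1 : Fin (k+1) → ℕ)
      rw [X'.d_comp, e'_deg hP, j'.map_d, ← snoc_single_last, snoc_add]
      simp
  map_comp := by
    intro μ ν h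
    cases μ with
    | lam α =>
      cases ν with
      | lam α' => exact ι'.map_comp α α' (Sum.inl.inj h)
      | gam β => exact nomatch h
      | mix β l =>
        have hsl : Λ.s α = p.vmap (Γ.r β) := Sum.inl.inj h
        refine Eq.trans (key hP (lift hp α (Γ.r β) hsl) β (lift_s hp _ _ _) l _ _
            (by rw [ι'.map_s, p.map_s, lift_s hp α (Γ.r β) hsl, X'.r_comp,
              (hP.2.2.2.2.2.2.2.2.1 _ _).2]))
          (comp_congr X' (congrArg ι'.emap (lift_p hp α (Γ.r β) hsl)) rfl _ _)
    | gam β =>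
      cases ν with
      | lam α' => exact nomatch h
      | gam β' => exact j'.map_comp β β' (Sum.inr.inj h)
      | mix β' l => exact nomatch h
    | mix β l =>
      cases ν with
      | lam α' => exact nomatch h
      | gam β' =>
        have hc : Γ.s β = Γ.r β' := Sum.inr.inj h
        refine Eq.trans (comp_congr X'
            (congrArg (fun w => e' (w, l)) (Γ.r_comp β β' hc))
            (j'.map_comp β β' hc) _
            (by rw [(hP.2.2.2.2.2.2.2.2.1 _ _).1, X'.r_comp, j'.map_r])) ?_
        exact (X'.comp_assoc _ _ _
          (by rw [(hP.2.2.2.2.2.2.2.2.1 _ _).1, j'.map_r])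
          (by rw [j'.map_s, j'.map_r, hc])).symm
      | mix β' l' => exact nomatch h

theorem PF_vmap_bij :
    Function.Bijective (Sum.elim ι'.vmap j'.vmap : Λ.V ⊕ Γ.V → X'.V) := by
  constructor
  · rintro (u | w) (u' | w') h
    · exact congrArg Sum.inl (hP.1 h)
    · exact absurd h (vertex_disjoint hP _ _)
    · exact absurd h.symm (vertex_disjoint hP _ _)
    · exact congrArg Sum.inr (hP.2.2.1 h)
  · intro v
    rcases vertex_cases hP v with ⟨u, hu⟩ | ⟨w, hw⟩
    · exact ⟨.inl u, hu.symm⟩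
    · exact ⟨.inr w, hw.symm⟩

theorem PFemap_d (τ : PE Λ Γ m) : X'.d (PFemap hP τ) = PD τ := by
  cases τ with
  | lam α => exact ι'.map_d α
  | gam β => exact j'.map_d β
  | mix β l =>
    show X'.d (X'.comp _ _ _) = _
    rw [X'.d_comp, e'_deg hP, j'.map_d, ← snoc_single_last, snoc_add]
    simp only [zero_add]
    rfl

theorem PFemap_inj : Function.Injective (PFemap hP) := by
  intro x y hxy
  have hd : PD x = PD y := by
    rw [← PFemap_d hP x, ← PFemap_d hP y, hxy]
  cases x with
  | lam α =>
    cases y with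
    | lam α' => exact congrArg PE.lam (hP.2.1 hxy)
    | gam β' =>
      exfalso
      have hmem : ι'.emap α ∈ Set.range ι'.emap ∩ Set.range j'.emap :=
        ⟨Set.mem_range_self _, ⟨β', hxy.symm⟩⟩
      rw [hP.2.2.2.2.1] at hmem
      exact hmem
    | mix β' l' =>
      exfalso
      have := congrFun hd (Fin.last k)
      simp [PD] at this
  | gam β =>
    cases y with
    | lam α' =>
      exfalso
      have hmem : ι'.emap α' ∈ Set.range ι'.emap ∩ Set.range j'.emap :=
        ⟨Set.mem_range_self _, ⟨β, hxy⟩⟩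
      rw [hP.2.2.2.2.1] at hmem
      exact hmem
    | gam β' => exact congrArg PE.gam (hP.2.2.2.1 hxy)
    | mix β' l' =>
      exfalso
      have := congrFun hd (Fin.last k)
      simp [PD] at this
  | mix β l =>
    cases y with
    | lam α' =>
      exfalso
      have := congrFun hd (Fin.last k)
      simp [PD] at this
    | gam β' =>
      exfalso
      have := congrFun hd (Fin.last k)
      simp [PD] at this
    | mix β' l' =>
      have hdβ : Γ.d β = Γ.d β' := by
        have : (Fin.snoc (Γ.d β) 1 : Fin (k+1) → ℕ) = Fin.snoc (Γ.d β') 1 := hd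
        exact (snoc_inj this).1
      have hcx : X'.s (e' (Γ.r β, l)) = X'.r (j'.emap β) := by
        rw [(hP.2.2.2.2.2.2.2.2.1 _ _).1, j'.map_r]
      have hcy : X'.s (e' (Γ.r β', l')) = X'.r (j'.emap β') := by
        rw [(hP.2.2.2.2.2.2.2.2.1 _ _).1, j'.map_r]
      have hfac : X'.d (X'.comp (e' (Γ.r β, l)) (j'.emap β) hcx) =
          Pi.single (Fin.last k) 1 + Fin.snoc (Γ.d β) 0 := by
        rw [X'.d_comp, e'_deg hP, j'.map_d]
      obtain ⟨⟨μ, ν⟩, _, huniq⟩ := X'.factor _ _ _ hfac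
      have u1 := huniq (e' (Γ.r β, l), j'.emap β)
        ⟨hcx, e'_deg hP _ _, j'.map_d β, rfl⟩
      have u2 := huniq (e' (Γ.r β', l'), j'.emap β')
        ⟨hcy, e'_deg hP _ _, by rw [j'.map_d, hdβ], hxy.symm⟩
      have hpq := u1.trans u2.symm
      have h1 : e' (Γ.r β, l) = e' (Γ.r β', l') := congrArg Prod.fst hpq
      have h2 : j'.emap β = j'.emap β' := congrArg Prod.snd hpq
      have hβ : β = β' := hP.2.2.2.1 h2
      have hl : l = l' := congrArg Prod.snd (hP.2.2.2.2.2.2.1 h1)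
      rw [hβ, hl]

theorem PFemap_surj : Function.Surjective (PFemap hP) := by
  intro τ
  rcases Nat.lt_or_ge (X'.d τ (Fin.last k)) 1 with h0 | h1
  · have h0' : X'.d τ (Fin.last k) = 0 := by omega
    rcases deg_zero_cases hP h0' with ⟨α, rfl⟩ | ⟨β, rfl⟩
    · exact ⟨.lam α, rfl⟩
    · exact ⟨.gam β, rfl⟩
  · obtain ⟨β, l, hc, hτ⟩ := deg_one_decomp hP h1
    exact ⟨.mix β l, hτ.symm⟩

theorem PFemap_e (v : Γ.V) (l : Fin m) : PFemap hP (Pe (v, l)) = e' (v, l) := by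
  refine Eq.trans (comp_congr X'
      (congrArg (fun w => e' (w, l)) (Γ.r_ident v)) (j'.map_ident v) _
      (by rw [(hP.2.2.2.2.2.2.2.2.1 _ _).1, X'.r_ident])) ?_
  exact X'.comp_ident _ _ _

end Abstract

section More

variable {Λ Γ : KGraph k} {p : KGraph.Hom Γ Λ} {m : ℕ}
  {σ : Γ.E → Equiv.Perm (Fin m)}
  (hp : KGraph.IsCovering p) (hσ : KGraph.IsCocycle σ)

include hp

theorem PX_rowFinite (hfc : KGraph.FiniteCovering p)
    (hΛ : Λ.RowFinite) (hΓ : Γ.RowFinite) : (PX hp σ hσ).RowFinite := by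
  intro v n
  rcases Nat.lt_or_ge (n (Fin.last k)) 1 with h0 | h1
  · have hn0 : n (Fin.last k) = 0 := by omega
    rcases v with u | w
    · refine Set.Finite.subset ((hΛ u (Fin.init n)).image PE.lam) ?_
      rintro τ ⟨h1, h2⟩
      cases τ with
      | lam α =>
        exact ⟨α, ⟨Sum.inl.inj h1,
          (snoc_inj (h2.trans (eq_snoc_of_last_eq 0 hn0))).1⟩, rfl⟩
      | gam β => exact absurd h1 (fun h => nomatch h)
      | mix β l =>
        exfalso
        have h3 : PD (PE.mix β l : PE Λ Γ m) (Fin.last k) = n (Fin.last k) :=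
          congrFun h2 (Fin.last k)
        simp [PD, hn0] at h3
    · refine Set.Finite.subset ((hΓ w (Fin.init n)).image PE.gam) ?_
      rintro τ ⟨h1, h2⟩
      cases τ with
      | lam α => exact absurd h1 (fun h => nomatch h)
      | gam β =>
        exact ⟨β, ⟨Sum.inr.inj h1,
          (snoc_inj (h2.trans (eq_snoc_of_last_eq 0 hn0))).1⟩, rfl⟩
      | mix β l => exact absurd h1 (fun h => nomatch h)
  · rcases Nat.lt_or_ge (n (Fin.last k)) 2 with h2' | h2'
    · have hn1 : n (Fin.last k) = 1 := by omega
      rcases v with u | w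
      · have hT : {β : Γ.E | p.vmap (Γ.r β) = u ∧ Γ.d β = Fin.init n}.Finite := by
          refine Set.Finite.subset (Set.Finite.biUnion (hfc u)
            (fun w _ => hΓ w (Fin.init n))) ?_
          rintro β ⟨hb1, hb2⟩
          exact Set.mem_biUnion hb1 ⟨rfl, hb2⟩
        refine Set.Finite.subset ((hT.prod (Set.finite_univ (α := Fin m))).image
          (fun bl => PE.mix bl.1 bl.2)) ?_
        rintro τ ⟨h1, h2⟩
        cases τ with
        | lam α =>
          exfalso
          have h3 : PD (PE.lam α : PE Λ Γ m) (Fin.last k) = n (Fin.last k) :=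
            congrFun h2 (Fin.last k)
          simp [PD, hn1] at h3
        | gam β => exact absurd h1 (fun h => nomatch h)
        | mix β l =>
          exact ⟨(β, l), ⟨⟨Sum.inl.inj h1,
            (snoc_inj (h2.trans (eq_snoc_of_last_eq 1 hn1))).1⟩,
            Set.mem_univ l⟩, rfl⟩
      · refine Set.Finite.subset Set.finite_empty ?_
        rintro τ ⟨h1, h2⟩
        cases τ with
        | lam α => exact absurd h1 (fun h => nomatch h)
        | gam β =>
          exfalso
          have h3 : PD (PE.gam β : PE Λ Γ m) (Fin.last k) = n (Fin.last k) :=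
            congrFun h2 (Fin.last k)
          simp [PD, hn1] at h3
        | mix β l => exact absurd h1 (fun h => nomatch h)
    · refine Set.Finite.subset Set.finite_empty ?_
      rintro τ ⟨h1, h2⟩
      exfalso
      cases τ with
      | lam α =>
        have h3 : PD (PE.lam α : PE Λ Γ m) (Fin.last k) = n (Fin.last k) :=
          congrFun h2 (Fin.last k)
        simp [PD] at h3
        omega
      | gam β =>
        have h3 : PD (PE.gam β : PE Λ Γ m) (Fin.last k) = n (Fin.last k) :=
          congrFun h2 (Fin.last k)
        simp [PD] at h3
        omega
      | mix β l =>
        have h3 : PD (PE.mix β l : PE Λ Γ m) (Fin.last k) = n (Fin.last k) :=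
          congrFun h2 (Fin.last k)
        simp [PD] at h3
        omega

theorem lc_iff : Λ.LocallyConvex ↔ Γ.LocallyConvex := by
  constructor
  · intro hΛ i j hij e f hde hdf hr
    obtain ⟨⟨e₁, he₁, hde₁⟩, ⟨f₁, hf₁, hdf₁⟩⟩ := hΛ i j hij (p.emap e) (p.emap f)
      (by rw [p.map_d, hde]) (by rw [p.map_d, hdf])
      (by rw [p.map_r, p.map_r, hr])
    constructor
    · obtain ⟨e₂, he₂, hpe₂⟩ := (hp.bij_r (Γ.s e)).surjOn
        (a := e₁) (he₁.symm.trans (p.map_s e))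
      exact ⟨e₂, he₂.symm, by rw [← p.map_d, hpe₂, hde₁]⟩
    · obtain ⟨f₂, hf₂, hpf₂⟩ := (hp.bij_r (Γ.s f)).surjOn
        (a := f₁) (hf₁.symm.trans (p.map_s f))
      exact ⟨f₂, hf₂.symm, by rw [← p.map_d, hpf₂, hdf₁]⟩
  · intro hΓ i j hij e f hde hdf hr
    obtain ⟨w, hw⟩ := hp.surj_v (Λ.r e)
    obtain ⟨et, hre, hpe⟩ := (hp.bij_r w).surjOn (a := e) hw.symm
    obtain ⟨ft, hrf, hpf⟩ := (hp.bij_r w).surjOn (a := f)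
      (show Λ.r f = p.vmap w by rw [← hr, hw])
    obtain ⟨⟨e₁, he₁, hde₁⟩, ⟨f₁, hf₁, hdf₁⟩⟩ := hΓ i j hij et ft
      (by rw [← p.map_d, hpe, hde]) (by rw [← p.map_d, hpf, hdf])
      (hre.trans hrf.symm)
    constructor
    · refine ⟨p.emap e₁, ?_, by rw [p.map_d, hde₁]⟩
      rw [← hpe, p.map_s, he₁, p.map_r]
    · refine ⟨p.emap f₁, ?_, by rw [p.map_d, hdf₁]⟩
      rw [← hpf, p.map_s, hf₁, p.map_r]

theorem PX_lc (hm : 0 < m) (hΛ : Λ.LocallyConvex) :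
    (PX hp σ hσ).LocallyConvex := by
  have hΓ : Γ.LocallyConvex := (lc_iff hp).mp hΛ
  intro i j hij e f hde hdf hr
  have hi : i ≠ Fin.last k := by
    intro h
    rw [h] at hij
    exact absurd (lt_of_le_of_lt (Fin.le_last j) hij) (lt_irrefl _)
  obtain ⟨i', rfl⟩ := Fin.exists_castSucc_eq.mpr hi
  by_cases hjl : j = Fin.last k
  · subst hjl
    cases f with
    | lam αf =>
      exfalso
      have h3 : PD (PE.lam αf : PE Λ Γ m) (Fin.last k) =
          (Pi.single (Fin.last k) 1 : Fin (k+1) → ℕ) (Fin.last k) := congrFun hdf (Fin.last k)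
      simp [PD, Pi.single_eq_same] at h3
    | gam βf =>
      exfalso
      have h3 : PD (PE.gam βf : PE Λ Γ m) (Fin.last k) =
          (Pi.single (Fin.last k) 1 : Fin (k+1) → ℕ) (Fin.last k) := congrFun hdf (Fin.last k)
      simp [PD, Pi.single_eq_same] at h3
    | mix βf lf =>
      have hdβf : Γ.d βf = 0 := (snoc_inj (hdf.trans snoc_single_last.symm)).1
      cases e with
      | gam βe => exact absurd hr (fun h => nomatch h)
      | mix βe le =>
        exfalso
        have h3 : PD (PE.mix βe le : PE Λ Γ m) (Fin.last k) =
            (Pi.single (Fin.castSucc i') 1 : Fin (k+1) → ℕ) (Fin.last k) :=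
          congrFun hde (Fin.last k)
        simp [PD, Pi.single_eq_of_ne (Fin.castSucc_lt_last i').ne'] at h3
      | lam α =>
        have hdα : Λ.d α = Pi.single i' 1 :=
          (snoc_inj (hde.trans (snoc_single_castSucc i').symm)).1
        have hrα : Λ.r α = p.vmap (Γ.r βf) := Sum.inl.inj hr
        constructor
        · obtain ⟨w, hw⟩ := hp.surj_v (Λ.s α)
          refine ⟨.mix (Γ.ident w) ⟨0, hm⟩, ?_, ?_⟩
          · show Sum.inl (Λ.s α) = Sum.inl (p.vmap (Γ.r (Γ.ident w)))
            rw [Γ.r_ident, hw]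
          · show (Fin.snoc (Γ.d (Γ.ident w)) 1 : Fin (k+1) → ℕ) = _
            rw [Γ.d_ident, snoc_single_last]
        · have hsr : Γ.s βf = Γ.r βf := by
            rw [eq_ident_of_d_eq_zero Γ hdβf, Γ.s_ident, Γ.r_ident]
          obtain ⟨β, hrβ, hpβ⟩ := (hp.bij_r (Γ.s βf)).surjOn (a := α)
            (show Λ.r α = p.vmap (Γ.s βf) by rw [hrα, hsr])
          refine ⟨.gam β, ?_, ?_⟩
          · show Sum.inr (Γ.s βf) = Sum.inr (Γ.r β)
            rw [hrβ]
          · show (Fin.snoc (Γ.d β) 0 : Fin (k+1) → ℕ) = _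
            rw [← p.map_d, hpβ, hdα, snoc_single_castSucc]
  · obtain ⟨j', rfl⟩ := Fin.exists_castSucc_eq.mpr hjl
    have hij' : i' < j' := Fin.castSucc_lt_castSucc_iff.mp hij
    cases e with
    | mix βe le =>
      exfalso
      have h3 : PD (PE.mix βe le : PE Λ Γ m) (Fin.last k) =
          (Pi.single (Fin.castSucc i') 1 : Fin (k+1) → ℕ) (Fin.last k) :=
        congrFun hde (Fin.last k)
      simp [PD, Pi.single_eq_of_ne (Fin.castSucc_lt_last i').ne'] at h3
    | lam αe =>
      cases f with
      | gam βf => exact absurd hr (fun h => nomatch h)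
      | mix βf lf =>
        exfalso
        have h3 : PD (PE.mix βf lf : PE Λ Γ m) (Fin.last k) =
            (Pi.single (Fin.castSucc j') 1 : Fin (k+1) → ℕ) (Fin.last k) :=
          congrFun hdf (Fin.last k)
        simp [PD, Pi.single_eq_of_ne (Fin.castSucc_lt_last j').ne'] at h3
      | lam αf =>
        have hdαe : Λ.d αe = Pi.single i' 1 :=
          (snoc_inj (hde.trans (snoc_single_castSucc i').symm)).1
        have hdαf : Λ.d αf = Pi.single j' 1 :=
          (snoc_inj (hdf.trans (snoc_single_castSucc j').symm)).1
        obtain ⟨⟨e₁, he₁, hde₁⟩, ⟨f₁, hf₁, hdf₁⟩⟩ :=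
          hΛ i' j' hij' αe αf hdαe hdαf (Sum.inl.inj hr)
        refine ⟨⟨.lam e₁, congrArg Sum.inl he₁, ?_⟩,
          ⟨.lam f₁, congrArg Sum.inl hf₁, ?_⟩⟩
        · show (Fin.snoc (Λ.d e₁) 0 : Fin (k+1) → ℕ) = _
          rw [hde₁, snoc_single_castSucc]
        · show (Fin.snoc (Λ.d f₁) 0 : Fin (k+1) → ℕ) = _
          rw [hdf₁, snoc_single_castSucc]
    | gam βe =>
      cases f with
      | lam αf => exact absurd hr (fun h => nomatch h)
      | mix βf lf => exact absurd hr (fun h => nomatch h)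
      | gam βf =>
        have hdβe : Γ.d βe = Pi.single i' 1 :=
          (snoc_inj (hde.trans (snoc_single_castSucc i').symm)).1
        have hdβf : Γ.d βf = Pi.single j' 1 :=
          (snoc_inj (hdf.trans (snoc_single_castSucc j').symm)).1
        obtain ⟨⟨e₁, he₁, hde₁⟩, ⟨f₁, hf₁, hdf₁⟩⟩ :=
          hΓ i' j' hij' βe βf hdβe hdβf (Sum.inr.inj hr)
        refine ⟨⟨.gam e₁, congrArg Sum.inr he₁, ?_⟩,
          ⟨.gam f₁, congrArg Sum.inr hf₁, ?_⟩⟩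
        · show (Fin.snoc (Γ.d e₁) 0 : Fin (k+1) → ℕ) = _
          rw [hde₁, snoc_single_castSucc]
        · show (Fin.snoc (Γ.d f₁) 0 : Fin (k+1) → ℕ) = _
          rw [hdf₁, snoc_single_castSucc]

end More

end CSGAux

end Aux

/-- given a covering system `(Λ, Γ, p, m, 𝔰)` of `k`-graphs, there is a
`(k+1)`-graph `Λ ×_{p,𝔰} Γ` satisfying properties (1)–(5), unique up to a
degree-preserving isomorphism compatible with the data.  Moreover, if the covering
system is row finite then `Λ ×_{p,𝔰} Γ` is row finite; and `Λ` is locally convex iff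
`Γ` is, in which case `Λ ×_{p,𝔰} Γ` is also locally convex. -/
theorem covering_system_graph (k : ℕ) (Λ Γ : KGraph k)
    (p : KGraph.Hom Γ Λ) (hp : KGraph.IsCovering p)
    (m : ℕ) (hm : 0 < m) (σ : Γ.E → Equiv.Perm (Fin m)) (hσ : KGraph.IsCocycle σ) :
    ∃ (X : KGraph (k + 1)) (ι : LiftHom Λ X) (j : LiftHom Γ X)
      (e : Γ.V × Fin m → X.E),
      CoveringSystemGraphProp Λ Γ p m σ X ι j e ∧
      (∀ (X' : KGraph (k + 1)) (ι' : LiftHom Λ X') (j' : LiftHom Γ X')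
        (e' : Γ.V × Fin m → X'.E),
        CoveringSystemGraphProp Λ Γ p m σ X' ι' j' e' →
        ∃ F : KGraph.Hom X X',
          Function.Bijective F.vmap ∧ Function.Bijective F.emap ∧
          (∀ v, F.vmap (ι.vmap v) = ι'.vmap v) ∧
          (∀ a, F.emap (ι.emap a) = ι'.emap a) ∧
          (∀ v, F.vmap (j.vmap v) = j'.vmap v) ∧
          (∀ b, F.emap (j.emap b) = j'.emap b) ∧
          (∀ v l, F.emap (e (v, l)) = e' (v, l))) ∧
      ((KGraph.FiniteCovering p ∧ Λ.RowFinite ∧ Γ.RowFinite) → X.RowFinite) ∧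
      (Λ.LocallyConvex ↔ Γ.LocallyConvex) ∧
      (Λ.LocallyConvex → X.LocallyConvex) := by
  classical
  refine ⟨CSGAux.PX hp σ hσ, CSGAux.Piota hp σ hσ, CSGAux.Pj hp σ hσ, CSGAux.Pe,
    CSGAux.PX_prop hp σ hσ, ?_, ?_, ?_, ?_⟩
  · intro X' ι' j' e' hP
    exact ⟨CSGAux.PF hP hp hσ, CSGAux.PF_vmap_bij hP,
      ⟨CSGAux.PFemap_inj hP, CSGAux.PFemap_surj hP⟩,
      fun v => rfl, fun a => rfl, fun v => rfl, fun b => rfl,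
      fun v l => CSGAux.PFemap_e hP v l⟩
  · rintro ⟨hfc, hΛ, hΓ⟩
    exact CSGAux.PX_rowFinite hp hσ hfc hΛ hΓ
  · exact CSGAux.lc_iff hp
  · intro hΛ
    exact CSGAux.PX_lc hp hσ hm hΛ
end

section
/- Let (Λ_n, Λ_{n+1}, p_n, m_n, 𝔰_n), n = 1, 2, 3, …, be a sequence of row-finite covering systems of k-graphs with no sources. Then there exists an n such that Λ_n contains a cycle with an entrance if and only if every Λ_n contains a cycle with an entrance. -/
/-!
A cycle with an entrance is pushed down along a covering by applying `p`; that the image still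
has an entrance follows from the bijectivity of `p` on range-fibres, which lets a factorisation
downstairs be lifted. Conversely, lifting a cycle `λ` from each vertex of the (finite) fibre over
`r λ` defines a self-map of that fibre; a periodic point of it gives a cycle upstairs lying over
a power `λⁿ`, and the lift of the entrance `μ` at that vertex is an entrance for it, because `μ`,
not being a prefix of `λ`, is not a prefix of any `λⁿ` either.
-/

theorem Function.periodicPts_nonempty {α : Type*} [Finite α] [Nonempty α] (f : α → α) :
    (Function.periodicPts f).Nonempty := by
  obtain ⟨x⟩ := ‹Nonempty α›
  obtain ⟨i, j, hij, he⟩ := Finite.exists_ne_map_eq_of_infinite fun n : ℕ => f^[n] x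
  wlog hlt : i < j generalizing i j
  · exact this j i hij.symm he.symm (by omega)
  refine ⟨f^[i] x, j - i, by omega, ?_⟩
  change f^[j - i] (f^[i] x) = f^[i] x
  rw [← Function.iterate_add_apply, Nat.sub_add_cancel hlt.le, ← he]

namespace KGraph

variable {k : ℕ}

def IsPrefix (Λ : KGraph k) (μ ν : Λ.E) : Prop :=
  ∃ (ρ : Λ.E) (h : Λ.s μ = Λ.r ρ), Λ.comp μ ρ h = ν

section Factorisation

variable {Λ : KGraph k}

theorem eq_of_comp_eq_comp {a b a' b' : Λ.E} {h : Λ.s a = Λ.r b} {h' : Λ.s a' = Λ.r b'}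
    (he : Λ.comp a b h = Λ.comp a' b' h') (hd : Λ.d a = Λ.d a') : a = a' := by
  have hdb : Λ.d b = Λ.d b' :=
    add_left_cancel (by rw [← Λ.d_comp a b h, he, Λ.d_comp, hd] : Λ.d a + Λ.d b = Λ.d a + Λ.d b')
  obtain ⟨_, -, huniq⟩ := Λ.factor (Λ.comp a b h) (Λ.d a) (Λ.d b) (Λ.d_comp a b h)
  exact congrArg Prod.fst
    ((huniq (a, b) ⟨h, rfl, rfl, rfl⟩).trans (huniq (a', b') ⟨h', hd.symm, hdb.symm, he.symm⟩).symm)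

theorem IsPrefix.of_comp {μ X Y : Λ.E} {h : Λ.s X = Λ.r Y} (hpre : Λ.IsPrefix μ (Λ.comp X Y h))
    (hd : Λ.d μ ≤ Λ.d X) : Λ.IsPrefix μ X := by
  obtain ⟨ρ, hρ, hc⟩ := hpre
  obtain ⟨⟨z, z'⟩, ⟨hz, hdz, -, rfl⟩, -⟩ :=
    Λ.factor X (Λ.d μ) (Λ.d X - Λ.d μ) (add_tsub_cancel_of_le hd).symm
  obtain rfl : μ = z :=
    eq_of_comp_eq_comp (hc.trans (Λ.comp_assoc z z' Y hz ((Λ.s_comp z z' hz).symm.trans h)))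
      hdz.symm
  exact ⟨z', hz, rfl⟩

end Factorisation

section Covering

variable {Γ Λ : KGraph k} {p : Hom Γ Λ}

theorem Hom.isPrefix_map (p : Hom Γ Λ) {μ ν : Γ.E} (h : Γ.IsPrefix μ ν) :
    Λ.IsPrefix (p.emap μ) (p.emap ν) := by
  obtain ⟨ρ, hρ, rfl⟩ := h
  exact ⟨p.emap ρ, _, (p.map_comp μ ρ hρ).symm⟩

theorem IsCovering.exists_lift (hp : IsCovering p) {w : Γ.V} {e : Λ.E} (h : p.vmap w = Λ.r e) :
    ∃ e', Γ.r e' = w ∧ p.emap e' = e :=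
  (hp.bij_r w).surjOn h.symm

theorem IsCovering.isPrefix_of_map (hp : IsCovering p) {μ ν : Γ.E} (hr : Γ.r μ = Γ.r ν)
    (h : Λ.IsPrefix (p.emap μ) (p.emap ν)) : Γ.IsPrefix μ ν := by
  obtain ⟨ρ, hρ, hc⟩ := h
  obtain ⟨ρ', hρ'r, rfl⟩ := hp.exists_lift (w := Γ.s μ) (by rw [← p.map_s, hρ])
  refine ⟨ρ', hρ'r.symm, (hp.bij_r (Γ.r ν)).injOn (by simp [Γ.r_comp, hr]) rfl ?_⟩
  rw [p.map_comp]
  exact hc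

/-- Some power of a cycle `λ` lifts to a cycle; it is recorded through a property `Q` that holds
of `λ` and is stable under composing with `λ`. -/
theorem IsCovering.exists_cycle_lift (hp : IsCovering p) (hfin : FiniteCovering p) {lam : Λ.E}
    (hcyc : Λ.s lam = Λ.r lam) (Q : Λ.E → Prop) (hQ : Q lam)
    (hQcomp : ∀ X (h : Λ.s X = Λ.r lam), Q X → Q (Λ.comp X lam h)) :
    ∃ c : Γ.E, Γ.s c = Γ.r c ∧ p.vmap (Γ.r c) = Λ.r lam ∧ Q (p.emap c) := by
  let Fib := {w : Γ.V // p.vmap w = Λ.r lam}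
  choose L hLr hLp using fun x : Fib => hp.exists_lift x.2
  let F : Fib → Fib := fun x => ⟨Γ.s (L x), by rw [← p.map_s, hLp, hcyc]⟩
  have : Finite Fib := (hfin _).to_subtype
  have : Nonempty Fib := nonempty_subtype.mpr (hp.surj_v _)
  obtain ⟨y, n, hn, hy⟩ := Function.periodicPts_nonempty F
  have paths : ∀ j, ∃ c, Γ.r c = y.1 ∧ Γ.s c = (F^[j + 1] y).1 ∧ Q (p.emap c) := by
    intro j
    induction j with
    | zero => exact ⟨L y, hLr y, rfl, (hLp y).symm ▸ hQ⟩
    | succ j ih =>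
      obtain ⟨c, hcr, hcs, hcQ⟩ := ih
      let z := F^[j + 1] y
      have hcz : Γ.s c = Γ.r (L z) := hcs.trans (hLr z).symm
      refine ⟨Γ.comp c (L z) hcz, by rw [Γ.r_comp, hcr], ?_, ?_⟩
      · rw [Γ.s_comp, Function.iterate_succ_apply' F (j + 1)]
      · have hs : Λ.s (p.emap c) = Λ.r lam := by rw [p.map_s, hcs]; exact (F^[j + 1] y).2
        have hmap : p.emap (Γ.comp c (L z) hcz) = Λ.comp (p.emap c) lam hs := by
          rw [p.map_comp]
          congr 1
          exact hLp z
        exact hmap ▸ hQcomp _ hs hcQ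
  obtain ⟨c, hcr, hcs, hcQ⟩ := paths (n - 1)
  rw [Nat.sub_add_cancel hn, hy.eq] at hcs
  exact ⟨c, hcs.trans hcr.symm, hcr ▸ y.2, hcQ⟩

theorem HasCycleWithEntrance.of_covering (hp : IsCovering p) (h : Γ.HasCycleWithEntrance) :
    Λ.HasCycleWithEntrance := by
  obtain ⟨lam, mu, hcyc, hr, hd, hne⟩ := h
  exact ⟨p.emap lam, p.emap mu, by rw [p.map_s, p.map_r, hcyc], by rw [p.map_r, p.map_r, hr],
    by rwa [p.map_d, p.map_d], fun hpre => hne (hp.isPrefix_of_map hr hpre)⟩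

theorem HasCycleWithEntrance.lift (hp : IsCovering p) (hfin : FiniteCovering p)
    (h : Λ.HasCycleWithEntrance) : Γ.HasCycleWithEntrance := by
  obtain ⟨lam, mu, hcyc, hr, hd, hne⟩ := h
  obtain ⟨c, hcyc', hcr, hdc, hnc⟩ :=
    hp.exists_cycle_lift hfin hcyc (fun ν => Λ.d mu ≤ Λ.d ν ∧ ¬ Λ.IsPrefix mu ν) ⟨hd, hne⟩
      fun X h ⟨hdX, hX⟩ =>
        ⟨hdX.trans (by rw [Λ.d_comp]; exact le_self_add), fun hpre => hX (hpre.of_comp hdX)⟩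
  obtain ⟨mu', hmu'r, rfl⟩ := hp.exists_lift (w := Γ.r c) (hcr.trans hr.symm)
  refine ⟨c, mu', hcyc', hmu'r, ?_, fun hpre => hnc (p.isPrefix_map hpre)⟩
  rwa [← p.map_d, ← p.map_d]

end Covering

end KGraph

theorem cycle_with_entrance_tower_general (k : ℕ) (Λ : ℕ → KGraph k)
    (p : ∀ n : ℕ, KGraph.Hom (Λ (n + 1)) (Λ n))
    (hcov : ∀ n, KGraph.IsCovering (p n))
    (hfin : ∀ n, KGraph.FiniteCovering (p n)) :
    (∃ n, KGraph.HasCycleWithEntrance (Λ n)) ↔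
      (∀ n, KGraph.HasCycleWithEntrance (Λ n)) := by
  refine ⟨fun ⟨n, hn⟩ => ?_, fun h => ⟨0, h 0⟩⟩
  have h0 : (Λ 0).HasCycleWithEntrance := by
    induction n with
    | zero => exact hn
    | succ n ih => exact ih (hn.of_covering (hcov n))
  intro j
  induction j with
  | zero => exact h0
  | succ j ih => exact ih.lift (hcov j) (hfin j)

/-- for a sequence `(Λ_n, Λ_{n+1}, p_n, m_n, 𝔰_n)` of row-finite covering
systems of `k`-graphs with no sources, some `Λ_n` contains a cycle with an entrance if
and only if every `Λ_n` contains a cycle with an entrance. -/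
theorem cycle_with_entrance_tower (k : ℕ) (Λ : ℕ → KGraph k)
    (p : ∀ n : ℕ, KGraph.Hom (Λ (n + 1)) (Λ n))
    (hcov : ∀ n, KGraph.IsCovering (p n))
    (hfin : ∀ n, KGraph.FiniteCovering (p n))
    (hrow : ∀ n, (Λ n).RowFinite)
    (hns : ∀ n, (Λ n).NoSources)
    (m : ℕ → ℕ) (hm : ∀ n, 0 < m n)
    (σ : ∀ n : ℕ, (Λ (n + 1)).E → Equiv.Perm (Fin (m n)))
    (hσ : ∀ n, KGraph.IsCocycle (σ n)) :
    (∃ n, KGraph.HasCycleWithEntrance (Λ n)) ↔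
      (∀ n, KGraph.HasCycleWithEntrance (Λ n)) :=
  cycle_with_entrance_tower_general k Λ p hcov hfin
end

section
/- Let p : F → E be a finite covering of row-finite directed graphs, and let A and B be the vertex adjacency matrices of E and F respectively. Then (1 − B^t) ∘ p* = p* ∘ (1 − A^t) as group homomorphisms from ℤE⁰ to ℤF⁰. Consequently, for any integer m, the map m·p* restricts to a homomorphism from ker(1 − A^t) to ker(1 − B^t). -/
/-- A directed graph: countable sets of vertices and edges with range and source maps. -/
structure DirGraph where
  V : Type
  E : Type
  countable_V : Countable V
  countable_E : Countable E
  r : E → V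
  s : E → V

/-- A directed graph is row-finite if each vertex receives only finitely many edges. -/
def DirGraph.RowFinite (E : DirGraph) : Prop :=
  ∀ v : E.V, {e : E.E | E.r e = v}.Finite

/-- A covering `p : F → E` of directed graphs: surjective maps on vertices and edges
commuting with range and source, restricting to bijections on the range-fibres and
source-fibres at each vertex of `F`. -/
structure GraphCovering (F E : DirGraph) where
  vmap : F.V → E.V
  emap : F.E → E.E
  surj_v : Function.Surjective vmap
  surj_e : Function.Surjective emap
  comm_r : ∀ f : F.E, E.r (emap f) = vmap (F.r f)
  comm_s : ∀ f : F.E, E.s (emap f) = vmap (F.s f)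
  bij_r : ∀ u : F.V, Set.BijOn emap {f : F.E | F.r f = u} {e : E.E | E.r e = vmap u}
  bij_s : ∀ u : F.V, Set.BijOn emap {f : F.E | F.s f = u} {e : E.E | E.s e = vmap u}

/-- A covering is finite if the fibre over each vertex is finite. -/
def GraphCovering.IsFinite {F E : DirGraph} (p : GraphCovering F E) : Prop :=
  ∀ v : E.V, {u : F.V | p.vmap u = v}.Finite

/-- for a finite covering `p : F → E` of row-finite directed graphs, with
`A, B` the vertex adjacency matrices of `E, F`, one has
`(1 - Bᵗ) ∘ p^* = p^* ∘ (1 - Aᵗ) : ℤE⁰ → ℤF⁰`; consequently for any integer `m`, the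
map `m · p^*` restricts to a homomorphism `ker(1 - Aᵗ) → ker(1 - Bᵗ)`. -/
theorem covering_intertwines_adjacency (E F : DirGraph)
    (hE : E.RowFinite) (hF : F.RowFinite)
    (p : GraphCovering F E) (hp : p.IsFinite)
    (At : (E.V →₀ ℤ) →+ (E.V →₀ ℤ))
    (hAt : ∀ v : E.V,
      At (Finsupp.single v 1) = ∑ e ∈ (hE v).toFinset, Finsupp.single (E.s e) 1)
    (Bt : (F.V →₀ ℤ) →+ (F.V →₀ ℤ))
    (hBt : ∀ u : F.V,
      Bt (Finsupp.single u 1) = ∑ f ∈ (hF u).toFinset, Finsupp.single (F.s f) 1)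
    (pstar : (E.V →₀ ℤ) →+ (F.V →₀ ℤ))
    (hpstar : ∀ v : E.V,
      pstar (Finsupp.single v 1) = ∑ u ∈ (hp v).toFinset, Finsupp.single u 1) :
    (∀ x : E.V →₀ ℤ, pstar x - Bt (pstar x) = pstar (x - At x)) ∧
    (∀ (m : ℤ) (x : E.V →₀ ℤ), x - At x = 0 →
      (m • pstar x) - Bt (m • pstar x) = 0) := by
  
  have key : ∀ v : E.V, Bt (pstar (Finsupp.single v 1)) = pstar (At (Finsupp.single v 1)) := by
    intro v
    rw [hpstar, hAt, map_sum, map_sum]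
    simp only [hBt, hpstar]
    rw [Finset.sum_sigma', Finset.sum_sigma']
    refine Finset.sum_bij (fun x _ => ⟨p.emap x.2, F.s x.2⟩) ?_ ?_ ?_ ?_
    · rintro ⟨u, f⟩ hx
      rw [Finset.mem_sigma, Set.Finite.mem_toFinset, Set.Finite.mem_toFinset] at hx ⊢
      obtain ⟨hu, hf⟩ := hx
      constructor
      · show E.r (p.emap f) = v
        rw [p.comm_r, hf, hu]
      · show p.vmap (F.s f) = E.s (p.emap f)
        rw [p.comm_s]
    · rintro ⟨u₁, f₁⟩ h₁ ⟨u₂, f₂⟩ h₂ heq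
      rw [Finset.mem_sigma, Set.Finite.mem_toFinset, Set.Finite.mem_toFinset] at h₁ h₂
      injection heq with he hs
      have hf : f₁ = f₂ := (p.bij_s (F.s f₁)).injOn rfl hs.symm he
      subst hf
      have e1 : F.r f₁ = u₁ := h₁.2
      have e2 : F.r f₁ = u₂ := h₂.2
      have e12 : u₁ = u₂ := e1.symm.trans e2
      subst e12
      rfl
    · rintro ⟨e, u⟩ hx
      rw [Finset.mem_sigma, Set.Finite.mem_toFinset, Set.Finite.mem_toFinset] at hx
      obtain ⟨he, hu⟩ := hx
      have hmem : e ∈ {e' : E.E | E.s e' = p.vmap u} := hu.symm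
      obtain ⟨f, hf, hef⟩ := (p.bij_s u).surjOn hmem
      refine ⟨⟨F.r f, f⟩, ?_, ?_⟩
      · rw [Finset.mem_sigma, Set.Finite.mem_toFinset, Set.Finite.mem_toFinset]
        refine ⟨?_, rfl⟩
        show p.vmap (F.r f) = v
        rw [← p.comm_r, hef, he]
      · have hf' : F.s f = u := hf
        subst hef
        subst hf'
        rfl
    · rintro ⟨u, f⟩ _
      rfl
  have main : ∀ x : E.V →₀ ℤ, pstar x - Bt (pstar x) = pstar (x - At x) := by
    intro x
    induction x using Finsupp.induction_linear with
    | zero => simp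
    | add a b ha hb =>
        rw [map_add, map_add, map_add]
        rw [show a + b - (At a + At b) = (a - At a) + (b - At b) by abel, map_add, ← ha, ← hb]
        abel
    | single a b =>
        have hb : Finsupp.single a b = b • Finsupp.single a (1 : ℤ) := by simp
        rw [hb, map_zsmul, map_zsmul, map_zsmul, ← smul_sub, ← smul_sub, map_zsmul]
        congr 1
        rw [map_sub, ← key]
  refine ⟨main, fun m x hx => ?_⟩
  have := main x
  rw [hx, map_zero] at this
  rw [map_zsmul, ← smul_sub, this, smul_zero]
end

section
/- Let n ≥ 3 and let A_n be the adjacency matrix of the dihedral graph D_n. Then the cokernel ℤ^{ℤ/nℤ} / Im(1 − A_n^t) is isomorphic, as an abelian group, to: ℤ ⊕ ℤ if n ≡ 0 (mod 6); the trivial group if n ≡ 1 or 5 (mod 6); ℤ/3ℤ if n ≡ 2 or 4 (mod 6); and ℤ/2ℤ ⊕ ℤ/2ℤ if n ≡ 3 (mod 6). -/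
/-! In the cokernel the classes `of i` of the basis vectors satisfy
`of i = of (i + 1) + of (i - 1)`.
Read along `ℕ`, `x k = of k` solves `x (k + 2) = x (k + 1) - x k`, hence `x (k + 3) = -x k`: the
sequence is `6`-periodic and generated by `x 0, x 1`, and `n`-periodicity forces
`x (n % 6) = x 0`, `x ((n + 1) % 6) = x 1`, which give the torsion relations in each residue class.
Conversely, a solution `W` of the same recurrence in the target group, of period dividing `n` and
with `W 0, W 1` generating the group, induces a map out of the cokernel with `of i ↦ W i`; any map
back sending `W 0, W 1` to `x 0, x 1` is its inverse. -/

noncomputable def dihedralAdj (n : ℕ) : Matrix (ZMod n) (ZMod n) ℤ :=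
  Matrix.of fun i j => if j = i + 1 ∨ j = i - 1 then 1 else 0

noncomputable def dihedralD (n : ℕ) [NeZero n] : (ZMod n → ℤ) →ₗ[ℤ] (ZMod n → ℤ) :=
  Matrix.mulVecLin (1 - (dihedralAdj n).transpose)

open Submodule

theorem LinearMap.bijective_of_leftInvOn {R M N : Type*} [Ring R] [AddCommGroup M] [Module R M]
    [AddCommGroup N] [Module R N] {φ : M →ₗ[R] N} {ψ : N →ₗ[R] M} {s : Set M}
    (hs : span R s = ⊤) (hφs : span R (φ '' s) = ⊤) (h : Set.LeftInvOn ψ φ s) :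
    Function.Bijective φ := by
  have hψφ : ψ ∘ₗ φ = LinearMap.id := LinearMap.ext_on hs h
  have hφψ : φ ∘ₗ ψ = LinearMap.id := by
    refine LinearMap.ext_on hφs ?_
    rintro _ ⟨x, hx, rfl⟩
    simp [h hx]
  exact Function.bijective_iff_has_inverse.2
    ⟨ψ, LinearMap.congr_fun hψφ, LinearMap.congr_fun hφψ⟩

section IntCastSurjective

variable {A : Type*} [Ring A] (hA : Function.Surjective (Int.cast : ℤ → A))
include hA

theorem span_int_one_eq_top : span ℤ {(1 : A)} = ⊤ := by
  refine eq_top_iff'.2 fun a => ?_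
  obtain ⟨z, rfl⟩ := hA a
  exact mem_span_singleton.2 ⟨z, by simp⟩

theorem span_int_prod_pair_eq_top : span ℤ {((1 : A), (0 : A)), (0, 1)} = ⊤ := by
  refine eq_top_iff'.2 fun ⟨a, b⟩ => ?_
  obtain ⟨s, rfl⟩ := hA a
  obtain ⟨t, rfl⟩ := hA b
  exact mem_span_pair.2 ⟨s, t, by ext <;> simp⟩

end IntCastSurjective

noncomputable def ZMod.toSpanSingleton {M : Type*} [AddCommGroup M] (k : ℕ) (c : M)
    (hc : k • c = 0) : ZMod k →ₗ[ℤ] M :=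
  (ZMod.lift k ⟨zmultiplesHom M c, by simpa using hc⟩).toIntLinearMap

theorem ZMod.toSpanSingleton_intCast {M : Type*} [AddCommGroup M] {k : ℕ} {c : M}
    (hc : k • c = 0) (z : ℤ) : ZMod.toSpanSingleton k c hc z = z • c := by
  simp [ZMod.toSpanSingleton]

@[simp]
theorem ZMod.toSpanSingleton_one {M : Type*} [AddCommGroup M] {k : ℕ} {c : M}
    (hc : k • c = 0) : ZMod.toSpanSingleton k c hc 1 = c := by
  simpa using ZMod.toSpanSingleton_intCast hc 1

section Recurrence

variable {M : Type*} [AddCommGroup M] {x : ℕ → M} (hx : ∀ k, x (k + 2) = x (k + 1) - x k)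
include hx

theorem recurrence_add_three (k : ℕ) : x (k + 3) = -x k := by
  rw [hx (k + 1), hx k]
  abel

theorem recurrence_periodic : Function.Periodic x 6 := fun k => by
  rw [show k + 6 = k + 3 + 3 from rfl, recurrence_add_three hx, recurrence_add_three hx, neg_neg]

theorem recurrence_mem_span (k : ℕ) : x k ∈ span ℤ {x 0, x 1} := by
  induction k using Nat.twoStepInduction with
  | zero => exact subset_span (by simp)
  | one => exact subset_span (by simp)
  | more k h₀ h₁ => rw [hx k]; exact sub_mem h₁ h₀

theorem recurrence_two_to_five :
    x 2 = x 1 - x 0 ∧ x 3 = -x 0 ∧ x 4 = -x 1 ∧ x 5 = x 0 - x 1 :=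
  ⟨hx 0, recurrence_add_three hx 0, recurrence_add_three hx 1, by
    rw [recurrence_add_three hx 2, hx 0, neg_sub]⟩

variable {n : ℕ} (hper₀ : x n = x 0) (hper₁ : x (n + 1) = x 1)
include hper₀ hper₁

theorem recurrence_mod_six_of_period : x (n % 6) = x 0 ∧ x ((n + 1) % 6) = x 1 :=
  ⟨(recurrence_periodic hx).map_mod_nat n ▸ hper₀,
    (recurrence_periodic hx).map_mod_nat (n + 1) ▸ hper₁⟩

theorem recurrence_eq_zero_of_mod_six (h : n % 6 = 1 ∨ n % 6 = 5) : x 0 = 0 ∧ x 1 = 0 := by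
  obtain ⟨h₀, h₁⟩ := recurrence_mod_six_of_period hx hper₀ hper₁
  obtain ⟨h₂, -, -, h₅⟩ := recurrence_two_to_five hx
  rcases h with h | h
  · rw [h] at h₀; rw [show (n + 1) % 6 = 2 by omega, h₂] at h₁
    exact ⟨by linear_combination (norm := module) -h₁,
      by linear_combination (norm := module) h₀ - h₁⟩
  · rw [h, h₅] at h₀; rw [show (n + 1) % 6 = 0 by omega] at h₁
    exact ⟨by linear_combination (norm := module) h₁ - h₀,
      by linear_combination (norm := module) -h₀⟩

theorem recurrence_three_nsmul_eq_zero (h : n % 6 = 2 ∨ n % 6 = 4) :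
    3 • x 0 = 0 ∧ x 1 = 2 • x 0 := by
  obtain ⟨h₀, h₁⟩ := recurrence_mod_six_of_period hx hper₀ hper₁
  obtain ⟨h₂, h₃, h₄, h₅⟩ := recurrence_two_to_five hx
  rcases h with h | h
  · rw [h, h₂] at h₀; rw [show (n + 1) % 6 = 3 by omega, h₃] at h₁
    exact ⟨by linear_combination (norm := module) -h₁ - h₀,
      by linear_combination (norm := module) h₀⟩
  · rw [h, h₄] at h₀; rw [show (n + 1) % 6 = 5 by omega, h₅] at h₁
    exact ⟨by linear_combination (norm := module) h₁ - 2 • h₀,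
      by linear_combination (norm := module) h₀ - h₁⟩

theorem recurrence_two_nsmul_eq_zero (h : n % 6 = 3) : 2 • x 0 = 0 ∧ 2 • x 1 = 0 := by
  obtain ⟨h₀, h₁⟩ := recurrence_mod_six_of_period hx hper₀ hper₁
  obtain ⟨-, h₃, h₄, -⟩ := recurrence_two_to_five hx
  rw [h, h₃] at h₀; rw [show (n + 1) % 6 = 4 by omega, h₄] at h₁
  exact ⟨by linear_combination (norm := module) -h₀,
    by linear_combination (norm := module) -h₁⟩

end Recurrence

theorem dihedralD_single {n : ℕ} [NeZero n] (hn : 3 ≤ n) (j : ZMod n) :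
    dihedralD n (Pi.single j 1) = Pi.single j 1 - Pi.single (j + 1) 1 - Pi.single (j - 1) 1 := by
  have hne : j + 1 ≠ j - 1 := by
    intro h
    have h2 : ((2 : ℕ) : ZMod n) = 0 := by
      rw [Nat.cast_ofNat, ← sub_eq_zero.2 h]; ring
    have := Nat.le_of_dvd two_pos ((ZMod.natCast_eq_zero_iff 2 n).1 h2)
    omega
  ext i
  simp only [dihedralD, Matrix.mulVecLin_apply, Matrix.mulVec_single_one, Matrix.col_apply,
    Matrix.sub_apply, Matrix.one_apply, Matrix.transpose_apply, dihedralAdj, Matrix.of_apply,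
    Pi.sub_apply, Pi.single_apply]
  by_cases h₁ : i = j + 1 <;> by_cases h₂ : i = j - 1 <;> simp_all

abbrev DihedralCokernel (n : ℕ) [NeZero n] := (ZMod n → ℤ) ⧸ LinearMap.range (dihedralD n)

namespace DihedralCokernel

variable {n : ℕ} [NeZero n]

variable (n) in
noncomputable def of (i : ZMod n) : DihedralCokernel n :=
  Submodule.Quotient.mk (Pi.single i 1)

theorem of_eq_add (hn : 3 ≤ n) (j : ZMod n) : of n j = of n (j + 1) + of n (j - 1) := by
  rw [of, of, of, ← Submodule.Quotient.mk_add, Submodule.Quotient.eq, ← sub_sub,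
    ← dihedralD_single hn]
  exact LinearMap.mem_range_self _ _

theorem of_natCast_add_two (hn : 3 ≤ n) (k : ℕ) :
    of n ((k + 2 : ℕ) : ZMod n) = of n ((k + 1 : ℕ) : ZMod n) - of n (k : ZMod n) := by
  have h := of_eq_add hn ((k + 1 : ℕ) : ZMod n)
  rw [show ((k + 1 : ℕ) : ZMod n) + 1 = (k + 2 : ℕ) by push_cast; ring,
    show ((k + 1 : ℕ) : ZMod n) - 1 = k by push_cast; ring] at h
  rw [h, add_sub_cancel_right]

theorem span_range_of : span ℤ (Set.range (of n)) = ⊤ := by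
  have h : Set.range (of n) =
      (LinearMap.range (dihedralD n)).mkQ '' Set.range (Pi.basisFun ℤ _) := by
    rw [← Set.range_comp]
    congr 1
    ext i : 1
    simp [of]
  rw [h, span_image, (Pi.basisFun ℤ _).span_eq, Submodule.map_top, range_mkQ]

theorem span_of_zero_of_one (hn : 3 ≤ n) : span ℤ {of n 0, of n 1} = ⊤ := by
  refine eq_top_iff.2 (span_range_of.symm.le.trans (span_le.2 ?_))
  rintro _ ⟨i, rfl⟩
  simpa using recurrence_mem_span (x := fun k : ℕ => of n k) (of_natCast_add_two hn) i.val

variable {M : Type*} [AddCommGroup M]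

noncomputable def lift (hn : 3 ≤ n) (w : ZMod n → M) (hw : ∀ j, w j = w (j + 1) + w (j - 1)) :
    DihedralCokernel n →ₗ[ℤ] M :=
  (LinearMap.range (dihedralD n)).liftQ (Fintype.linearCombination ℤ w) <| by
    rw [LinearMap.range_le_ker_iff]
    refine (Pi.basisFun ℤ (ZMod n)).ext fun j => ?_
    simp [dihedralD_single hn, hw j]

theorem lift_of (hn : 3 ≤ n) (w : ZMod n → M) (hw : ∀ j, w j = w (j + 1) + w (j - 1))
    (i : ZMod n) : lift hn w hw (of n i) = w i := by
  simp [lift, of]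

theorem nonempty_addEquiv (hn : 3 ≤ n) {m : ℕ} (hm : m ∣ n) (W : ZMod m → M)
    (hW : ∀ j, W j = W (j + 1) + W (j - 1)) (hWspan : span ℤ {W 0, W 1} = ⊤)
    (ψ : M →ₗ[ℤ] DihedralCokernel n) (hψ₀ : ψ (W 0) = of n 0)
    (hψ₁ : ψ (W 1) = of n 1) :
    Nonempty (DihedralCokernel n ≃+ M) := by
  let π := ZMod.castHom hm (ZMod m)
  let φ := lift hn (W ∘ π) fun j => by
    simpa only [Function.comp_apply, map_add, map_sub, map_one] using hW (π j)
  have hφ₀ : φ (of n 0) = W 0 := by simp only [φ, lift_of, Function.comp_apply, map_zero]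
  have hφ₁ : φ (of n 1) = W 1 := by simp only [φ, lift_of, Function.comp_apply, map_one]
  have hφ : φ '' {of n 0, of n 1} = {W 0, W 1} := by rw [Set.image_pair, hφ₀, hφ₁]
  have hleft : Set.LeftInvOn ψ φ {of n 0, of n 1} := by
    rintro _ (rfl | rfl)
    exacts [by rw [hφ₀, hψ₀], by rw [hφ₁, hψ₁]]
  exact ⟨AddEquiv.ofBijective φ.toAddMonoidHom
    (LinearMap.bijective_of_leftInvOn (span_of_zero_of_one hn) (hφ ▸ hWspan) hleft)⟩

theorem nonempty_addEquiv_int_prod (hn : 3 ≤ n) (h : n % 6 = 0) :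
    Nonempty (DihedralCokernel n ≃+ ℤ × ℤ) :=
  nonempty_addEquiv hn (Nat.dvd_of_mod_eq_zero h)
    ![(1, 0), (0, 1), (-1, 1), (-1, 0), (0, -1), (1, -1)]
    (fun j => by fin_cases j <;> rfl)
    (span_int_prod_pair_eq_top fun z => ⟨z, Int.cast_id⟩)
    ((LinearMap.toSpanSingleton ℤ _ (of n 0)).coprod (LinearMap.toSpanSingleton ℤ _ (of n 1)))
    (by simp) (by simp)

theorem subsingleton (hn : 3 ≤ n) (h : n % 6 = 1 ∨ n % 6 = 5) :
    Subsingleton (DihedralCokernel n) := by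
  obtain ⟨h₀, h₁⟩ := recurrence_eq_zero_of_mod_six (x := fun k : ℕ => of n k)
    (of_natCast_add_two hn) (by simp) (by simp) h
  have hbot := span_of_zero_of_one hn
  simp only [Nat.cast_zero, Nat.cast_one] at h₀ h₁
  rw [h₀, h₁, Set.pair_eq_singleton, span_zero_singleton] at hbot
  exact (Submodule.subsingleton_iff ℤ).1 (subsingleton_of_bot_eq_top hbot)

theorem nonempty_addEquiv_zmod_three (hn : 3 ≤ n) (h : n % 6 = 2 ∨ n % 6 = 4) :
    Nonempty (DihedralCokernel n ≃+ ZMod 3) := by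
  obtain ⟨h₃, h₁⟩ := recurrence_three_nsmul_eq_zero (x := fun k : ℕ => of n k)
    (of_natCast_add_two hn) (by simp) (by simp) h
  simp only [Nat.cast_zero, Nat.cast_one] at h₃ h₁
  refine nonempty_addEquiv hn (m := 2) (by omega) ![1, 2]
    (fun j => by fin_cases j <;> rfl) ?_
    (ZMod.toSpanSingleton 3 (of n 0) h₃) (by simp) ?_
  · exact eq_top_iff.2 ((span_int_one_eq_top ZMod.intCast_surjective).symm.le.trans
      (span_mono (by simp)))
  · simpa [h₁, ofNat_zsmul] using ZMod.toSpanSingleton_intCast h₃ 2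

theorem nonempty_addEquiv_zmod_two_prod (hn : 3 ≤ n) (h : n % 6 = 3) :
    Nonempty (DihedralCokernel n ≃+ ZMod 2 × ZMod 2) := by
  obtain ⟨h₀, h₁⟩ := recurrence_two_nsmul_eq_zero (x := fun k : ℕ => of n k)
    (of_natCast_add_two hn) (by simp) (by simp) h
  simp only [Nat.cast_zero, Nat.cast_one] at h₀ h₁
  exact nonempty_addEquiv hn (m := 3) (by omega) ![(1, 0), (0, 1), (1, 1)]
    (fun j => by fin_cases j <;> rfl)
    (span_int_prod_pair_eq_top ZMod.intCast_surjective)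
    ((ZMod.toSpanSingleton 2 (of n 0) h₀).coprod (ZMod.toSpanSingleton 2 (of n 1) h₁))
    (by simp) (by simp)

end DihedralCokernel

/-- the cokernel `ℤ^{ℤ/nℤ} / Im(1 - A_n^t)` for the dihedral graph `D_n`
(`n ≥ 3`) is: `ℤ ⊕ ℤ` if `n ≡ 0 (mod 6)`; trivial if `n ≡ 1, 5 (mod 6)`; `ℤ/3ℤ` if
`n ≡ 2, 4 (mod 6)`; and `ℤ/2ℤ ⊕ ℤ/2ℤ` if `n ≡ 3 (mod 6)`. -/
theorem dihedral_cokernel_computation (n : ℕ) (hn : 3 ≤ n) [NeZero n] :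
    (n % 6 = 0 →
      Nonempty (((ZMod n → ℤ) ⧸ LinearMap.range (dihedralD n)) ≃+ (ℤ × ℤ))) ∧
    (n % 6 = 1 ∨ n % 6 = 5 →
      Subsingleton ((ZMod n → ℤ) ⧸ LinearMap.range (dihedralD n))) ∧
    (n % 6 = 2 ∨ n % 6 = 4 →
      Nonempty (((ZMod n → ℤ) ⧸ LinearMap.range (dihedralD n)) ≃+ ZMod 3)) ∧
    (n % 6 = 3 →
      Nonempty (((ZMod n → ℤ) ⧸ LinearMap.range (dihedralD n)) ≃+ (ZMod 2 × ZMod 2))) :=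
  ⟨DihedralCokernel.nonempty_addEquiv_int_prod hn, DihedralCokernel.subsingleton hn,
    DihedralCokernel.nonempty_addEquiv_zmod_three hn,
    DihedralCokernel.nonempty_addEquiv_zmod_two_prod hn⟩
end

section
/- Let n ≥ 3 and let A_n be the adjacency matrix of the dihedral graph D_n. The map a ↦ (a_0, a_1) is an injective group homomorphism from ker(1 − A_n^t) to ℤ². If 6 divides n, this map is an isomorphism of ker(1 − A_n^t) onto ℤ²; if 6 does not divide n, then ker(1 − A_n^t) = 0. -/
open Matrix

def IsNeighbourSum {R : Type*} [AddGroupWithOne R] (a : R → ℤ) : Prop :=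
  ∀ i, a (i - 1) + a (i + 1) = a i

lemma sub_one_ne_add_one {n : ℕ} (hn : 3 ≤ n) (i : ZMod n) : i - 1 ≠ i + 1 := by
  intro h
  have h2 : ((2 : ℕ) : ZMod n) = 0 := by
    push_cast
    linear_combination -h
  have := Nat.le_of_dvd two_pos ((ZMod.natCast_eq_zero_iff 2 n).mp h2)
  omega

lemma transpose_dihedralAdj_mulVec_apply {n : ℕ} [NeZero n] (hn : 3 ≤ n) (a : ZMod n → ℤ)
    (i : ZMod n) : ((dihedralAdj n)ᵀ *ᵥ a) i = a (i - 1) + a (i + 1) := by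
  have hadj (j : ZMod n) :
      dihedralAdj n j i = if j ∈ ({i - 1, i + 1} : Finset (ZMod n)) then 1 else 0 := by
    simp only [dihedralAdj, of_apply, Finset.mem_insert, Finset.mem_singleton]
    congr 1
    apply propext
    constructor <;> rintro (rfl | rfl) <;> simp
  simp only [mulVec, dotProduct, transpose_apply, hadj, ite_mul, one_mul, zero_mul,
    Finset.sum_ite_mem, Finset.univ_inter]
  exact Finset.sum_pair (sub_one_ne_add_one hn i)

lemma mem_ker_dihedralD_iff {n : ℕ} [NeZero n] (hn : 3 ≤ n) (a : ZMod n → ℤ) :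
    a ∈ LinearMap.ker (dihedralD n) ↔ IsNeighbourSum a := by
  simp only [LinearMap.mem_ker, dihedralD, mulVecLin_apply, sub_mulVec, one_mulVec,
    sub_eq_zero, funext_iff, transpose_dihedralAdj_mulVec_apply hn]
  exact forall_congr' fun i => eq_comm

namespace IsNeighbourSum

variable {R S : Type*}

lemma apply_natCast_add_two [AddGroupWithOne R] {a : R → ℤ} (ha : IsNeighbourSum a) (k : ℕ) :
    a ((k + 2 : ℕ) : R) = a ((k + 1 : ℕ) : R) - a k := by
  have := ha ((k + 1 : ℕ) : R)
  rw [Nat.cast_succ, add_sub_cancel_right, add_assoc, one_add_one_eq_two] at this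
  push_cast
  linarith

lemma apply_natCast_eq [AddGroupWithOne R] [AddGroupWithOne S] {a : R → ℤ} {b : S → ℤ}
    (ha : IsNeighbourSum a) (hb : IsNeighbourSum b) (h0 : a 0 = b 0) (h1 : a 1 = b 1) (k : ℕ) :
    a k = b k := by
  induction k using Nat.twoStepInduction with
  | zero => simpa using h0
  | one => simpa using h1
  | more k hk hk1 => rw [ha.apply_natCast_add_two, hb.apply_natCast_add_two, hk, hk1]

lemma eq_of_apply_zero_of_apply_one {n : ℕ} [NeZero n] {a b : ZMod n → ℤ}
    (ha : IsNeighbourSum a) (hb : IsNeighbourSum b) (h0 : a 0 = b 0) (h1 : a 1 = b 1) :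
    a = b := by
  funext i
  simpa using ha.apply_natCast_eq hb h0 h1 i.val

lemma comp_ringHom [Ring R] [Ring S] {a : S → ℤ} (ha : IsNeighbourSum a) (f : R →+* S) :
    IsNeighbourSum (a ∘ f) := by
  intro i
  simpa using ha (f i)

end IsNeighbourSum

def periodicSolution₀ : ZMod 6 → ℤ := ![1, 0, -1, -1, 0, 1]
def periodicSolution₁ : ZMod 6 → ℤ := ![0, 1, 1, 0, -1, -1]

lemma isNeighbourSum_periodicSolution (x y : ℤ) :
    IsNeighbourSum fun r => x * periodicSolution₀ r + y * periodicSolution₁ r := by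
  have h₀ : IsNeighbourSum periodicSolution₀ := by unfold IsNeighbourSum; decide
  have h₁ : IsNeighbourSum periodicSolution₁ := by unfold IsNeighbourSum; decide
  intro r
  linear_combination x * h₀ r + y * h₁ r

/-- The solution with initial values `(x, y)` takes the values `(x, y) * M ^ r` at `(r, r + 1)`,
for the companion matrix `M`; this is `det (M ^ r - 1)`. -/
lemma periodicSolution_det_ne_zero : ∀ r : ZMod 6, r ≠ 0 →
    (periodicSolution₀ r - 1) * (periodicSolution₁ (r + 1) - 1)
      - periodicSolution₁ r * periodicSolution₀ (r + 1) ≠ 0 := by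
  decide

lemma eq_zero_of_periodicSolution {r : ZMod 6} (hr : r ≠ 0) {x y : ℤ}
    (h₀ : x * periodicSolution₀ r + y * periodicSolution₁ r = x)
    (h₁ : x * periodicSolution₀ (r + 1) + y * periodicSolution₁ (r + 1) = y) :
    x = 0 ∧ y = 0 := by
  have hdet := periodicSolution_det_ne_zero r hr
  set c₀ := periodicSolution₀ r
  set s₀ := periodicSolution₁ r
  set c₁ := periodicSolution₀ (r + 1)
  set s₁ := periodicSolution₁ (r + 1)
  have hx : ((c₀ - 1) * (s₁ - 1) - s₀ * c₁) * x = 0 := by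
    linear_combination (s₁ - 1) * h₀ - s₀ * h₁
  have hy : ((c₀ - 1) * (s₁ - 1) - s₀ * c₁) * y = 0 := by
    linear_combination (c₀ - 1) * h₁ - c₁ * h₀
  exact ⟨(mul_eq_zero.mp hx).resolve_left hdet, (mul_eq_zero.mp hy).resolve_left hdet⟩

lemma exists_mem_ker_dihedralD {n : ℕ} [NeZero n] (hn : 3 ≤ n) (h6 : 6 ∣ n) (x y : ℤ) :
    ∃ a ∈ LinearMap.ker (dihedralD n), a 0 = x ∧ a 1 = y := by
  refine ⟨(fun r => x * periodicSolution₀ r + y * periodicSolution₁ r) ∘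
    ZMod.castHom h6 (ZMod 6), ?_, ?_, ?_⟩
  · exact (mem_ker_dihedralD_iff hn _).mpr
      ((isNeighbourSum_periodicSolution x y).comp_ringHom _)
  all_goals
    simp only [Function.comp_apply, map_zero, map_one]
    simp [periodicSolution₀, periodicSolution₁]

lemma ker_dihedralD_eq_bot {n : ℕ} [NeZero n] (hn : 3 ≤ n) (h6 : ¬ 6 ∣ n) :
    LinearMap.ker (dihedralD n) = ⊥ := by
  refine (Submodule.eq_bot_iff _).mpr fun a ha => ?_
  have ha := (mem_ker_dihedralD_iff hn a).mp ha
  have hb := isNeighbourSum_periodicSolution (a 0) (a 1)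
  have hab := ha.apply_natCast_eq hb (by simp [periodicSolution₀, periodicSolution₁])
    (by simp [periodicSolution₀, periodicSolution₁])
  have hr : ((n : ℕ) : ZMod 6) ≠ 0 := by rwa [Ne, ZMod.natCast_eq_zero_iff]
  obtain ⟨h0, h1⟩ := eq_zero_of_periodicSolution hr (by simpa using (hab n).symm)
    (by simpa using (hab (n + 1)).symm)
  exact ha.eq_of_apply_zero_of_apply_one (b := 0) (fun _ => by simp) (by simpa) (by simpa)

/-- `a ↦ (a_0, a_1)` is an injective group homomorphism from
`ker(1 - A_n^t)` to `ℤ²`; it is an isomorphism onto `ℤ²` when `6 ∣ n`, and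
`ker(1 - A_n^t) = 0` when `6 ∤ n`. -/
theorem dihedral_kernel_map (n : ℕ) (hn : 3 ≤ n) [NeZero n] :
    (∀ a b : LinearMap.ker (dihedralD n),
      (((a + b : LinearMap.ker (dihedralD n)) : ZMod n → ℤ) 0,
        ((a + b : LinearMap.ker (dihedralD n)) : ZMod n → ℤ) 1) =
      ((a : ZMod n → ℤ) 0, (a : ZMod n → ℤ) 1) +
        ((b : ZMod n → ℤ) 0, (b : ZMod n → ℤ) 1)) ∧
    Function.Injective (fun a : LinearMap.ker (dihedralD n) =>
      ((a : ZMod n → ℤ) 0, (a : ZMod n → ℤ) 1)) ∧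
    (6 ∣ n → Function.Bijective (fun a : LinearMap.ker (dihedralD n) =>
      ((a : ZMod n → ℤ) 0, (a : ZMod n → ℤ) 1))) ∧
    (¬ 6 ∣ n → LinearMap.ker (dihedralD n) = ⊥) := by
  have hinj : Function.Injective (fun a : LinearMap.ker (dihedralD n) =>
      ((a : ZMod n → ℤ) 0, (a : ZMod n → ℤ) 1)) := fun a b hab =>
    Subtype.ext <| ((mem_ker_dihedralD_iff hn a).mp a.2).eq_of_apply_zero_of_apply_one
      ((mem_ker_dihedralD_iff hn b).mp b.2) (congrArg Prod.fst hab) (congrArg Prod.snd hab)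
  refine ⟨fun _ _ => rfl, hinj, fun h6 => ⟨hinj, ?_⟩, ker_dihedralD_eq_bot hn⟩
  rintro ⟨x, y⟩
  obtain ⟨a, ha, rfl, rfl⟩ := exists_mem_ker_dihedralD hn h6 x y
  exact ⟨⟨a, ha⟩, rfl⟩
end

section
/- Let H be a finite-index subgroup of ℤ², let G = ℤ²/H, and let ∂_1 : ℤG ⊕ ℤG → ℤG be the homomorphism with ∂_1(δ_g ⊕ 0) = δ_g − δ_{g+[e_1]} and ∂_1(0 ⊕ δ_g) = δ_g − δ_{g+[e_2]}. Then the quotient group ℤG / Im(∂_1) is infinite cyclic, generated by the class of δ_{[0]}. -/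
/-- for a finite-index subgroup `H ≤ ℤ²` with `G = ℤ²/H`, and `∂₁` the
homomorphism `ℤG ⊕ ℤG → ℤG` with `∂₁(δ_g ⊕ 0) = δ_g - δ_{g+[e₁]}` and
`∂₁(0 ⊕ δ_g) = δ_g - δ_{g+[e₂]}`, the quotient `ℤG / Im(∂₁)` is infinite cyclic,
generated by the class of `δ_{[0]}`. -/
theorem coker_d1_infinite_cyclic (H : AddSubgroup (ℤ × ℤ))
    [Fintype ((ℤ × ℤ) ⧸ H)] [DecidableEq ((ℤ × ℤ) ⧸ H)]
    (d1 : ((((ℤ × ℤ) ⧸ H) → ℤ) × (((ℤ × ℤ) ⧸ H) → ℤ)) →+ (((ℤ × ℤ) ⧸ H) → ℤ))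
    (hd1a : ∀ g : (ℤ × ℤ) ⧸ H,
      d1 (Pi.single g (1 : ℤ), 0) =
        Pi.single g (1 : ℤ) - Pi.single (g + QuotientAddGroup.mk ((1, 0) : ℤ × ℤ)) (1 : ℤ))
    (hd1b : ∀ g : (ℤ × ℤ) ⧸ H,
      d1 (0, Pi.single g (1 : ℤ)) =
        Pi.single g (1 : ℤ) - Pi.single (g + QuotientAddGroup.mk ((0, 1) : ℤ × ℤ)) (1 : ℤ)) :
    (∀ x : (((ℤ × ℤ) ⧸ H) → ℤ) ⧸ d1.range,
      ∃ c : ℤ, x = c • QuotientAddGroup.mk' d1.range (Pi.single (0 : (ℤ × ℤ) ⧸ H) (1 : ℤ))) ∧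
    (∀ c : ℤ,
      c • QuotientAddGroup.mk' d1.range (Pi.single (0 : (ℤ × ℤ) ⧸ H) (1 : ℤ)) = 0 → c = 0) := by
  classical
  set e1 : (ℤ × ℤ) ⧸ H := QuotientAddGroup.mk ((1, 0) : ℤ × ℤ) with he1
  set e2 : (ℤ × ℤ) ⧸ H := QuotientAddGroup.mk ((0, 1) : ℤ × ℤ) with he2
  set π := QuotientAddGroup.mk' d1.range with hπ
  set q : ((ℤ × ℤ) ⧸ H) → _ := fun g => π (Pi.single g (1 : ℤ)) with hq
  -- single as smul
  have hsingle : ∀ (g : (ℤ × ℤ) ⧸ H) (c : ℤ),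
      (Pi.single g c : ((ℤ × ℤ) ⧸ H) → ℤ) = c • Pi.single g (1 : ℤ) := by
    intro g c
    funext j
    by_cases h : j = g <;> simp [Pi.single_apply, h]
  have h1 : ∀ g, q (g + e1) = q g := by
    intro g
    refine (QuotientAddGroup.eq_iff_sub_mem).mpr ?_
    have : Pi.single g (1 : ℤ) - Pi.single (g + e1) (1 : ℤ) ∈ d1.range :=
      ⟨(Pi.single g (1 : ℤ), 0), hd1a g⟩
    simpa using neg_mem this
  have h2 : ∀ g, q (g + e2) = q g := by
    intro g
    refine (QuotientAddGroup.eq_iff_sub_mem).mpr ?_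
    have : Pi.single g (1 : ℤ) - Pi.single (g + e2) (1 : ℤ) ∈ d1.range :=
      ⟨(0, Pi.single g (1 : ℤ)), hd1b g⟩
    simpa using neg_mem this
  have key : ∀ g : (ℤ × ℤ) ⧸ H, q g = q 0 := by
    have hmk1 : ∀ m n : ℤ, (QuotientAddGroup.mk ((m + 1, n) : ℤ × ℤ) : (ℤ × ℤ) ⧸ H)
        = QuotientAddGroup.mk ((m, n) : ℤ × ℤ) + e1 := by
      intro m n
      rw [he1, ← QuotientAddGroup.mk_add]
      norm_num
    have hmk1' : ∀ m n : ℤ, (QuotientAddGroup.mk ((m - 1, n) : ℤ × ℤ) : (ℤ × ℤ) ⧸ H) + e1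
        = QuotientAddGroup.mk ((m, n) : ℤ × ℤ) := by
      intro m n
      rw [he1, ← QuotientAddGroup.mk_add]
      norm_num
    have hmk2 : ∀ n : ℤ, (QuotientAddGroup.mk ((0, n + 1) : ℤ × ℤ) : (ℤ × ℤ) ⧸ H)
        = QuotientAddGroup.mk ((0, n) : ℤ × ℤ) + e2 := by
      intro n
      rw [he2, ← QuotientAddGroup.mk_add]
      norm_num
    have hmk2' : ∀ n : ℤ, (QuotientAddGroup.mk ((0, n - 1) : ℤ × ℤ) : (ℤ × ℤ) ⧸ H) + e2
        = QuotientAddGroup.mk ((0, n) : ℤ × ℤ) := by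
      intro n
      rw [he2, ← QuotientAddGroup.mk_add]
      norm_num
    have col : ∀ n : ℤ, q (QuotientAddGroup.mk ((0, n) : ℤ × ℤ)) = q 0 := by
      intro n
      induction n using Int.induction_on with
      | zero => rfl
      | succ n ih => rw [hmk2, h2, ih]
      | pred n ih =>
          rw [← hmk2' (-n)] at ih
          rw [h2] at ih
          simpa using ih
    have row : ∀ m n : ℤ, q (QuotientAddGroup.mk ((m, n) : ℤ × ℤ)) = q 0 := by
      intro m n
      induction m using Int.induction_on with
      | zero => exact col n
      | succ m ih => rw [hmk1, h1, ih]
      | pred m ih =>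
          rw [← hmk1' (-m) n] at ih
          rw [h1] at ih
          simpa using ih
    intro g
    induction g using QuotientAddGroup.induction_on with
    | H z => exact row z.1 z.2
  -- the sum homomorphism
  set σ : (((ℤ × ℤ) ⧸ H) → ℤ) →+ ℤ :=
    { toFun := fun f => ∑ g, f g
      map_zero' := by simp
      map_add' := by intro a b; simp [Finset.sum_add_distrib] } with hσdef
  have hσs : ∀ (g : (ℤ × ℤ) ⧸ H) (c : ℤ), σ (Pi.single g c) = c := by
    intro g c
    simp [hσdef, Finset.sum_pi_single']
  have hσrange : ∀ x ∈ d1.range, σ x = 0 := by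
    rintro x ⟨⟨a, b⟩, rfl⟩
    have hab : ((a, b) : (((ℤ × ℤ) ⧸ H) → ℤ) × (((ℤ × ℤ) ⧸ H) → ℤ))
        = (∑ g, a g • ((Pi.single g (1 : ℤ), 0) : (((ℤ × ℤ) ⧸ H) → ℤ) × (((ℤ × ℤ) ⧸ H) → ℤ)))
          + (∑ g, b g • ((0, Pi.single g (1 : ℤ)) : (((ℤ × ℤ) ⧸ H) → ℤ) × (((ℤ × ℤ) ⧸ H) → ℤ))) := by
      refine Prod.ext ?_ ?_ <;>
        simp [Prod.fst_sum, Prod.snd_sum, ← hsingle, Finset.univ_sum_single]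
    rw [hab, map_add, map_sum, map_sum, map_add]
    simp only [map_zsmul, hd1a, hd1b, map_sum, map_sub, hσs]
    simp
  have hqsmul : ∀ (f : ((ℤ × ℤ) ⧸ H) → ℤ), π f = (σ f) • q 0 := by
    intro f
    have hf : f = ∑ g, f g • Pi.single g (1 : ℤ) := by
      simp [← hsingle, Finset.univ_sum_single]
    calc π f = π (∑ g, f g • Pi.single g (1 : ℤ)) := by rw [← hf]
      _ = ∑ g, f g • q g := by
        rw [map_sum]
        exact Finset.sum_congr rfl fun g _ => map_zsmul π (f g) _
      _ = ∑ g, f g • q 0 := by simp [key]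
      _ = (∑ g, f g) • q 0 := by rw [← Finset.sum_smul]
      _ = (σ f) • q 0 := rfl
  constructor
  · intro x
    obtain ⟨f, rfl⟩ := QuotientAddGroup.mk'_surjective d1.range x
    exact ⟨σ f, hqsmul f⟩
  · intro c hc
    have : π (c • Pi.single (0 : (ℤ × ℤ) ⧸ H) (1 : ℤ)) = 0 := by
      rw [map_zsmul]; exact hc
    have hmem : c • Pi.single (0 : (ℤ × ℤ) ⧸ H) (1 : ℤ) ∈ d1.range :=
      (QuotientAddGroup.eq_zero_iff _).mp this
    have := hσrange _ hmem
    rwa [map_zsmul, hσs, smul_eq_mul, mul_one] at this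
end

section
/- Let H be a finite-index subgroup of ℤ², let G = ℤ²/H, and let ∂_2 : ℤG → ℤG ⊕ ℤG be the homomorphism with ∂_2(δ_g) = (δ_{g+[e_2]} − δ_g) ⊕ (δ_g − δ_{g+[e_1]}). Then ker(∂_2) = {c · 1_G : c ∈ ℤ}, the infinite cyclic subgroup generated by the constant function 1_G = Σ_{g ∈ G} δ_g. -/
/-!
`∂₂ f = (f(· - [e₂]) - f, f - f(· - [e₁]))`, so `f` lies in the kernel exactly when it is periodic
with periods `[e₁]` and `[e₂]`; these generate `ℤ²/H`, so such an `f` is constant.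
-/

open Function LinearMap

variable {G : Type*} [AddCommGroup G]

def translationDiff (a b : G) : (G → ℤ) →ₗ[ℤ] (G → ℤ) × (G → ℤ) :=
  (funLeft ℤ ℤ (· - a) - LinearMap.id).prod (LinearMap.id - funLeft ℤ ℤ (· - b))

lemma translationDiff_apply (a b : G) (f : G → ℤ) :
    translationDiff a b f = (f ∘ (· - a) - f, f - f ∘ (· - b)) :=
  rfl

lemma mem_ker_translationDiff_iff {a b : G} {f : G → ℤ} :
    f ∈ ker (translationDiff a b) ↔ Periodic f a ∧ Periodic f b := by
  rw [mem_ker, translationDiff_apply, Prod.mk_eq_zero, sub_eq_zero, sub_eq_zero, funext_iff,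
    funext_iff]
  refine and_congr ⟨fun h x => ?_, fun h x => h.sub_eq x⟩
    ⟨fun h x => ?_, fun h x => (h.sub_eq x).symm⟩
  · simpa using (h (x + a)).symm
  · simpa using h (x + b)

section Single

variable [DecidableEq G]

lemma Pi.single_comp_sub {M : Type*} [Zero M] (a g : G) (m : M) :
    Pi.single g m ∘ (· - a) = Pi.single (g + a) m := by
  ext h
  simp only [comp_apply, Pi.single_apply, sub_eq_iff_eq_add]

variable [Finite G] {d : (G → ℤ) →+ (G → ℤ) × (G → ℤ)} {a b : G}

lemma toIntLinearMap_eq_translationDiff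
    (hd : ∀ g, d (Pi.single g 1) =
      (Pi.single (g + a) 1 - Pi.single g 1, Pi.single g 1 - Pi.single (g + b) 1)) :
    d.toIntLinearMap = translationDiff a b :=
  (Pi.basisFun ℤ G).ext fun g => by
    rw [Pi.basisFun_apply, AddMonoidHom.coe_toIntLinearMap, hd, translationDiff_apply,
      Pi.single_comp_sub, Pi.single_comp_sub]

lemma mem_ker_iff_periodic
    (hd : ∀ g, d (Pi.single g 1) =
      (Pi.single (g + a) 1 - Pi.single g 1, Pi.single g 1 - Pi.single (g + b) 1))
    (f : G → ℤ) :
    f ∈ d.ker ↔ Periodic f a ∧ Periodic f b := by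
  rw [← mem_ker_translationDiff_iff, ← toIntLinearMap_eq_translationDiff hd]
  rfl

end Single

lemma QuotientAddGroup.mk_int_prod (H : AddSubgroup (ℤ × ℤ)) (m n : ℤ) :
    (QuotientAddGroup.mk (m, n) : (ℤ × ℤ) ⧸ H) =
      m • QuotientAddGroup.mk (1, 0) + n • QuotientAddGroup.mk (0, 1) := by
  rw [← QuotientAddGroup.mk_zsmul, ← QuotientAddGroup.mk_zsmul, ← QuotientAddGroup.mk_add]
  congr 1
  ext <;> simp

lemma Function.Periodic.eq_of_quotient_int_prod {α : Type*} {H : AddSubgroup (ℤ × ℤ)}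
    {f : (ℤ × ℤ) ⧸ H → α} (h₁ : Periodic f (QuotientAddGroup.mk (1, 0)))
    (h₂ : Periodic f (QuotientAddGroup.mk (0, 1))) (x : (ℤ × ℤ) ⧸ H) : f x = f 0 := by
  obtain ⟨⟨m, n⟩, rfl⟩ := QuotientAddGroup.mk_surjective x
  rw [QuotientAddGroup.mk_int_prod]
  simpa using (h₁.zsmul m).add_period (h₂.zsmul n) 0

/-- for a finite-index subgroup `H ≤ ℤ²` with `G = ℤ²/H`, and `∂₂` the
homomorphism `ℤG → ℤG ⊕ ℤG` with
`∂₂(δ_g) = (δ_{g+[e₂]} - δ_g) ⊕ (δ_g - δ_{g+[e₁]})`, one has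
`ker(∂₂) = {c · 1_G : c ∈ ℤ}`, the infinite cyclic subgroup generated by the constant
function `1_G = Σ_{g ∈ G} δ_g`. -/
theorem ker_d2_constants (H : AddSubgroup (ℤ × ℤ))
    [Fintype ((ℤ × ℤ) ⧸ H)] [DecidableEq ((ℤ × ℤ) ⧸ H)]
    (d2 : (((ℤ × ℤ) ⧸ H) → ℤ) →+ ((((ℤ × ℤ) ⧸ H) → ℤ) × (((ℤ × ℤ) ⧸ H) → ℤ)))
    (hd2 : ∀ g : (ℤ × ℤ) ⧸ H,
      d2 (Pi.single g (1 : ℤ)) =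
        (Pi.single (g + QuotientAddGroup.mk ((0, 1) : ℤ × ℤ)) (1 : ℤ) - Pi.single g (1 : ℤ),
         Pi.single g (1 : ℤ) - Pi.single (g + QuotientAddGroup.mk ((1, 0) : ℤ × ℤ)) (1 : ℤ))) :
    ((fun _ : (ℤ × ℤ) ⧸ H => (1 : ℤ)) = ∑ g : (ℤ × ℤ) ⧸ H, Pi.single g (1 : ℤ)) ∧
    ∀ f : ((ℤ × ℤ) ⧸ H) → ℤ,
      f ∈ d2.ker ↔ ∃ c : ℤ, f = c • fun _ : (ℤ × ℤ) ⧸ H => (1 : ℤ) := by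
  refine ⟨(Finset.univ_sum_single _).symm, fun f => ?_⟩
  rw [mem_ker_iff_periodic hd2]
  constructor
  · rintro ⟨h₂, h₁⟩
    refine ⟨f 0, funext fun x => ?_⟩
    rw [Pi.smul_apply, smul_eq_mul, mul_one, h₁.eq_of_quotient_int_prod h₂ x]
  · rintro ⟨c, rfl⟩
    exact ⟨fun _ => rfl, fun _ => rfl⟩
end

section
/- Let H be a finite-index subgroup of ℤ², let G = ℤ²/H, let ∂_2 : ℤG → ℤG ⊕ ℤG be the homomorphism with ∂_2(δ_g) = (δ_{g+[e_2]} − δ_g) ⊕ (δ_g − δ_{g+[e_1]}), and set z_g := ∂_2(δ_g). Then Σ_{g ∈ G} z_g = 0, and for every h ∈ G the family {z_g : g ∈ G, g ≠ h} is a ℤ-basis of the subgroup Im(∂_2): it is ℤ-linearly independent and generates Im(∂_2). In particular Im(∂_2) is free abelian of rank |G| − 1. -/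
set_option linter.unusedSectionVars false

section Aux

variable {G : Type*} [AddCommGroup G] [Fintype G] [DecidableEq G]

private lemma sum_single_shift (a : G) (f : G → ℤ) :
    ∑ g : G, f g • (Pi.single (g + a) (1:ℤ) : G → ℤ) = fun x => f (x - a) := by
  rw [← Finset.univ_sum_single (fun x => f (x - a))]
  refine Fintype.sum_equiv (Equiv.addRight a) _ _ fun g => ?_
  simp [← Pi.single_smul]

private lemma sum_single_smul (f : G → ℤ) :
    ∑ g : G, f g • (Pi.single g (1:ℤ) : G → ℤ) = f := by
  rw [← Finset.univ_sum_single f]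
  exact Finset.sum_congr rfl fun g _ => by simp [← Pi.single_smul]

private lemma hom_apply_sum {M : Type*} [AddCommGroup M] (d : (G → ℤ) →+ M) (f : G → ℤ) :
    d f = ∑ g : G, f g • d (Pi.single g (1:ℤ)) := by
  conv_lhs => rw [← sum_single_smul f]
  rw [map_sum]
  exact Finset.sum_congr rfl fun g _ => (map_zsmul d _ _)

private lemma d_apply (a b : G) (d : (G → ℤ) →+ ((G → ℤ) × (G → ℤ)))
    (hd : ∀ g : G, d (Pi.single g (1:ℤ)) =
      (Pi.single (g + a) (1:ℤ) - Pi.single g 1, Pi.single g 1 - Pi.single (g + b) (1:ℤ)))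
    (f : G → ℤ) :
    d f = (fun x => f (x - a) - f x, fun x => f x - f (x - b)) := by
  rw [hom_apply_sum d f]
  simp only [hd]
  rw [Prod.ext_iff, Prod.fst_sum, Prod.snd_sum]
  constructor
  · simp only [Prod.smul_fst, smul_sub]
    rw [Finset.sum_sub_distrib, sum_single_shift, sum_single_smul]
    funext x; simp
  · simp only [Prod.smul_snd, smul_sub]
    rw [Finset.sum_sub_distrib, sum_single_shift, sum_single_smul]
    funext x; simp

end Aux

private lemma invariant_zsmul {G : Type*} [AddCommGroup G] (f : G → ℤ) (c : G)
    (h1 : ∀ x, f (x + c) = f x)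
    (h2 : ∀ x, f (x - c) = f x) : ∀ (n : ℤ) (x : G), f (x + n • c) = f x := by
  intro n
  induction n using Int.induction_on with
  | zero => simp
  | succ n ih => intro x
                 have : x + ((n : ℤ) + 1) • c = (x + (n:ℤ) • c) + c := by
                   rw [add_zsmul]; abel
                 rw [this, h1, ih]
  | pred n ih => intro x
                 have : x + (-(n : ℤ) - 1) • c = (x + (-(n:ℤ)) • c) - c := by
                   rw [sub_zsmul]; abel
                 rw [this, h2, ih]

private lemma const_of_invariant (H : AddSubgroup (ℤ × ℤ)) (f : ((ℤ × ℤ) ⧸ H) → ℤ)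
    (h1 : ∀ x, f (x - QuotientAddGroup.mk ((0,1) : ℤ × ℤ)) = f x)
    (h2 : ∀ x, f (x - QuotientAddGroup.mk ((1,0) : ℤ × ℤ)) = f x)
    (g : (ℤ × ℤ) ⧸ H) : f g = f 0 := by
  set a : (ℤ × ℤ) ⧸ H := QuotientAddGroup.mk ((0,1) : ℤ × ℤ)
  set b : (ℤ × ℤ) ⧸ H := QuotientAddGroup.mk ((1,0) : ℤ × ℤ)
  have h1' : ∀ x, f (x + a) = f x := fun x => by
    have := h1 (x + a); simpa using this.symm
  have h2' : ∀ x, f (x + b) = f x := fun x => by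
    have := h2 (x + b); simpa using this.symm
  have ka := invariant_zsmul f a h1' h1
  have kb := invariant_zsmul f b h2' h2
  induction g using QuotientAddGroup.induction_on with
  | H p =>
    have hp : (QuotientAddGroup.mk p : (ℤ × ℤ) ⧸ H) = 0 + p.1 • b + p.2 • a := by
      have : (p.1 • ((1,0) : ℤ × ℤ) + p.2 • ((0,1) : ℤ × ℤ)) = p := by
        simp [Prod.ext_iff]
      rw [zero_add, ← QuotientAddGroup.mk_zsmul, ← QuotientAddGroup.mk_zsmul,
        ← QuotientAddGroup.mk_add, this]
    rw [hp, ka, kb]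

/-- for a finite-index subgroup `H ≤ ℤ²` with `G = ℤ²/H` and `∂₂` as in
the chain complex computing `K_*(C^*(Δ₂/H))`, setting `z_g := ∂₂(δ_g)` one has
`Σ_g z_g = 0`, and for every `h ∈ G` the family `{z_g : g ≠ h}` is a ℤ-basis of
`Im(∂₂)`; in particular `Im(∂₂)` is free abelian of rank `|G| - 1`. -/
theorem image_d2_basis (H : AddSubgroup (ℤ × ℤ))
    [Fintype ((ℤ × ℤ) ⧸ H)] [DecidableEq ((ℤ × ℤ) ⧸ H)]
    (d2 : (((ℤ × ℤ) ⧸ H) → ℤ) →+ ((((ℤ × ℤ) ⧸ H) → ℤ) × (((ℤ × ℤ) ⧸ H) → ℤ)))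
    (hd2 : ∀ g : (ℤ × ℤ) ⧸ H,
      d2 (Pi.single g (1 : ℤ)) =
        (Pi.single (g + QuotientAddGroup.mk ((0, 1) : ℤ × ℤ)) (1 : ℤ) - Pi.single g (1 : ℤ),
         Pi.single g (1 : ℤ) - Pi.single (g + QuotientAddGroup.mk ((1, 0) : ℤ × ℤ)) (1 : ℤ))) :
    (∑ g : (ℤ × ℤ) ⧸ H, d2 (Pi.single g (1 : ℤ)) = 0) ∧
    (∀ h : (ℤ × ℤ) ⧸ H, ∀ c : ((ℤ × ℤ) ⧸ H) → ℤ,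
      (∑ g ∈ Finset.univ.erase h, c g • d2 (Pi.single g (1 : ℤ))) = 0 →
        ∀ g : (ℤ × ℤ) ⧸ H, g ≠ h → c g = 0) ∧
    (∀ h : (ℤ × ℤ) ⧸ H, ∀ x ∈ d2.range, ∃ c : ((ℤ × ℤ) ⧸ H) → ℤ,
      x = ∑ g ∈ Finset.univ.erase h, c g • d2 (Pi.single g (1 : ℤ))) ∧
    Nonempty (d2.range ≃+ (Fin (Fintype.card ((ℤ × ℤ) ⧸ H) - 1) → ℤ)) := by
  have hker : ∀ f : ((ℤ × ℤ) ⧸ H) → ℤ, d2 f = 0 → ∀ g, f g = f 0 := by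
    intro f hf
    rw [d_apply _ _ d2 hd2 f, Prod.ext_iff] at hf
    refine const_of_invariant H f (fun x => ?_) (fun x => ?_)
    · exact sub_eq_zero.mp (congrFun hf.1 x)
    · exact (sub_eq_zero.mp (congrFun hf.2 x)).symm
  have hconst : ∀ k : ℤ, d2 (fun _ => k) = 0 := by
    intro k
    rw [d_apply _ _ d2 hd2]
    refine Prod.ext ?_ ?_ <;> funext x <;> simp
  -- part 1
  have part1 : ∑ g : (ℤ × ℤ) ⧸ H, d2 (Pi.single g (1 : ℤ)) = 0 := by
    rw [← map_sum]
    have : ∑ g : (ℤ × ℤ) ⧸ H, (Pi.single g (1:ℤ) : ((ℤ × ℤ) ⧸ H) → ℤ) = fun _ => (1:ℤ) :=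
      Finset.univ_sum_single (fun _ => (1:ℤ))
    rw [this, hconst]
  -- part 2
  have part2 : ∀ h : (ℤ × ℤ) ⧸ H, ∀ c : ((ℤ × ℤ) ⧸ H) → ℤ,
      (∑ g ∈ Finset.univ.erase h, c g • d2 (Pi.single g (1 : ℤ))) = 0 →
        ∀ g : (ℤ × ℤ) ⧸ H, g ≠ h → c g = 0 := by
    intro h c hc g hg
    set c' : ((ℤ × ℤ) ⧸ H) → ℤ := Function.update c h 0 with hc'
    have hsum : ∑ g' : (ℤ × ℤ) ⧸ H, c' g' • d2 (Pi.single g' (1:ℤ)) =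
        ∑ g' ∈ Finset.univ.erase h, c g' • d2 (Pi.single g' (1:ℤ)) := by
      rw [← Finset.sum_erase_add _ _ (Finset.mem_univ h)]
      have e1 : c' h = 0 := Function.update_self h 0 c
      rw [e1, zero_smul, add_zero]
      exact Finset.sum_congr rfl fun g' hg' => by
        rw [hc', Function.update_of_ne (Finset.ne_of_mem_erase hg')]
    have hd2c' : d2 c' = 0 := by
      rw [hom_apply_sum d2 c', hsum, hc]
    have hcst := hker c' hd2c'
    have h0 : c' 0 = 0 := by
      rw [← hcst h]; exact Function.update_self h 0 c
    have := (hcst g).trans h0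
    rwa [hc', Function.update_of_ne hg] at this
  -- part 3
  have part3 : ∀ h : (ℤ × ℤ) ⧸ H, ∀ x ∈ d2.range, ∃ c : ((ℤ × ℤ) ⧸ H) → ℤ,
      x = ∑ g ∈ Finset.univ.erase h, c g • d2 (Pi.single g (1 : ℤ)) := by
    intro h x hx
    obtain ⟨f, rfl⟩ := hx
    refine ⟨fun g => f g - f h, ?_⟩
    have key : ∑ g ∈ Finset.univ.erase h, (f g - f h) • d2 (Pi.single g (1:ℤ)) =
        ∑ g : (ℤ × ℤ) ⧸ H, (f g - f h) • d2 (Pi.single g (1:ℤ)) := by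
      rw [← Finset.sum_erase_add _ _ (Finset.mem_univ h)]
      simp
    rw [key, ← hom_apply_sum d2 (fun g => f g - f h)]
    have : (fun g => f g - f h) = f - (fun _ => f h) := rfl
    rw [this, map_sub, hconst, sub_zero]
  refine ⟨part1, part2, part3, ?_⟩
  -- part 4: the rank statement
  set S := {g : (ℤ × ℤ) ⧸ H // g ≠ (0 : (ℤ × ℤ) ⧸ H)}
  have θadd : ∀ c₁ c₂ : S → ℤ,
      (fun x : (ℤ × ℤ) ⧸ H => if hx : x = 0 then 0 else (c₁ + c₂) ⟨x, hx⟩) =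
      (fun x : (ℤ × ℤ) ⧸ H => if hx : x = 0 then 0 else c₁ ⟨x, hx⟩) +
      (fun x : (ℤ × ℤ) ⧸ H => if hx : x = 0 then 0 else c₂ ⟨x, hx⟩) := by
    intro c₁ c₂; funext x
    by_cases hx : x = 0 <;> simp [hx]
  set θ : (S → ℤ) →+ (((ℤ × ℤ) ⧸ H) → ℤ) :=
    AddMonoidHom.mk' (fun c => fun x => if hx : x = 0 then 0 else c ⟨x, hx⟩) θadd with hθ
  set Ψ : (S → ℤ) →+ d2.range := d2.rangeRestrict.comp θ with hΨ
  have hΨval : ∀ c, (Ψ c : (((ℤ × ℤ) ⧸ H) → ℤ) × (((ℤ × ℤ) ⧸ H) → ℤ)) = d2 (θ c) :=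
    fun c => rfl
  have hΨinj : Function.Injective Ψ := by
    intro c₁ c₂ hcc
    have hsub : Ψ (c₁ - c₂) = 0 := by rw [map_sub, hcc, sub_self]
    have h0 : d2 (θ (c₁ - c₂)) = 0 := by
      have := congrArg (Subtype.val) hsub
      rwa [hΨval] at this
    have hcst := hker _ h0
    have key : ∀ g : (ℤ × ℤ) ⧸ H, θ (c₁ - c₂) g = 0 := by
      intro g
      rw [hcst g]
      simp [hθ]
    funext g
    have := key g.val
    simp only [hθ, AddMonoidHom.mk'_apply, g.prop, dif_neg] at this
    exact sub_eq_zero.mp this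
  have hΨsurj : Function.Surjective Ψ := by
    rintro ⟨x, f, rfl⟩
    refine ⟨fun g => f g.val - f 0, ?_⟩
    apply Subtype.ext
    rw [hΨval]
    have : θ (fun g : S => f g.val - f 0) = f - (fun _ => f 0) := by
      funext x
      by_cases hx : x = 0 <;> simp [hθ, hx]
    rw [this, map_sub, hconst, sub_zero]
  have hcard : Fintype.card S = Fintype.card ((ℤ × ℤ) ⧸ H) - 1 := by
    have h1 : Fintype.card S = Fintype.card {g : (ℤ × ℤ) ⧸ H // ¬ (g = 0)} := rfl
    rw [h1, Fintype.card_subtype_compl, Fintype.card_subtype_eq]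
  exact ⟨((AddEquiv.ofBijective Ψ ⟨hΨinj, hΨsurj⟩).symm.trans
    (AddEquiv.arrowCongr (Fintype.equivFinOfCardEq hcard) (AddEquiv.refl ℤ)))⟩
end

section
/- Let H' ⊆ H be finite-index subgroups of ℤ², with G = ℤ²/H, G' = ℤ²/H', natural surjection p : G' → G, and p* : ℤG → ℤG' defined by p*(δ_v) = Σ_{u ∈ G', p(u) = v} δ_u. Then: (i) p* ∘ ∂_1^H = ∂_1^{H'} ∘ (p* ⊕ p*) and (p* ⊕ p*) ∘ ∂_2^H = ∂_2^{H'} ∘ p*; (ii) p*(1_G) = 1_{G'}, so p* restricts to the homomorphism ker(∂_2^H) → ker(∂_2^{H'}) sending 1_G to 1_{G'}; (iii) p* maps Im(∂_1^H) into Im(∂_1^{H'}), and p*(δ_{[0]}) − [H : H'] · δ_{[0]'} lies in Im(∂_1^{H'}); that is, the induced homomorphism on cokernels ℤG/Im(∂_1^H) → ℤG'/Im(∂_1^{H'}) sends the class of δ_{[0]} to [H : H'] times the class of δ_{[0]'}. -/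
open QuotientAddGroup in
lemma covnat_eq_sum_single {G : Type*} [Fintype G] [DecidableEq G] (f : G → ℤ) :
    f = ∑ g : G, f g • Pi.single g (1 : ℤ) := by
  funext x
  simp [Finset.sum_apply, Pi.single_apply]

lemma covnat_one_eq_sum_single {G : Type*} [Fintype G] [DecidableEq G] :
    (fun _ => (1:ℤ) : G → ℤ) = ∑ g : G, Pi.single g (1:ℤ) := by
  funext x
  simp [Finset.sum_apply, Pi.single_apply]

lemma covnat_hom_ext {G M : Type*} [Fintype G] [DecidableEq G] [AddCommGroup M]
    (φ ψ : (G → ℤ) →+ M) (h : ∀ g, φ (Pi.single g 1) = ψ (Pi.single g 1)) (f : G → ℤ) :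
    φ f = ψ f := by
  rw [covnat_eq_sum_single f, map_sum, map_sum]
  simp only [map_zsmul, h]

lemma covnat_fiber_shift {H H' : AddSubgroup (ℤ × ℤ)}
    [Fintype ((ℤ × ℤ) ⧸ H')] [DecidableEq ((ℤ × ℤ) ⧸ H')] [DecidableEq ((ℤ × ℤ) ⧸ H)]
    (pmap : ((ℤ × ℤ) ⧸ H') →+ ((ℤ × ℤ) ⧸ H))
    (hpmap : ∀ x : ℤ × ℤ, pmap (QuotientAddGroup.mk x) = QuotientAddGroup.mk x)
    (v : (ℤ × ℤ) ⧸ H) (c : ℤ × ℤ) :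
    ∑ u ∈ Finset.univ.filter (fun u : (ℤ × ℤ) ⧸ H' => pmap u = v),
        Pi.single (u + QuotientAddGroup.mk c) (1:ℤ)
      = ∑ u ∈ Finset.univ.filter (fun u : (ℤ × ℤ) ⧸ H' => pmap u = v + QuotientAddGroup.mk c),
        Pi.single u (1:ℤ) := by
  refine Finset.sum_nbij' (i := fun u => u + QuotientAddGroup.mk c)
    (j := fun u => u - QuotientAddGroup.mk c) ?_ ?_ ?_ ?_ ?_
  · intro a ha
    simp only [Finset.mem_filter, Finset.mem_univ, true_and] at ha ⊢
    rw [map_add, ha]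
    congr 1
    induction c using Prod.rec
    exact hpmap _
  · intro a ha
    simp only [Finset.mem_filter, Finset.mem_univ, true_and] at ha ⊢
    rw [map_sub, ha]
    have : pmap (QuotientAddGroup.mk c) = QuotientAddGroup.mk c := hpmap _
    rw [this, add_sub_cancel_right]
  · intro a _; simp
  · intro a _; simp
  · intro a _; rfl

lemma covnat_trans_mem {H' : AddSubgroup (ℤ × ℤ)} [DecidableEq ((ℤ × ℤ) ⧸ H')]
    (d1H' : ((((ℤ × ℤ) ⧸ H') → ℤ) × (((ℤ × ℤ) ⧸ H') → ℤ)) →+ (((ℤ × ℤ) ⧸ H') → ℤ))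
    (hd1H'a : ∀ g : (ℤ × ℤ) ⧸ H',
      d1H' (Pi.single g (1 : ℤ), 0) =
        Pi.single g (1 : ℤ) - Pi.single (g + QuotientAddGroup.mk ((1, 0) : ℤ × ℤ)) (1 : ℤ))
    (hd1H'b : ∀ g : (ℤ × ℤ) ⧸ H',
      d1H' (0, Pi.single g (1 : ℤ)) =
        Pi.single g (1 : ℤ) - Pi.single (g + QuotientAddGroup.mk ((0, 1) : ℤ × ℤ)) (1 : ℤ))
    (a : (ℤ × ℤ) ⧸ H') (c : ℤ × ℤ) :
    Pi.single a (1:ℤ) - Pi.single (a + QuotientAddGroup.mk c) (1:ℤ) ∈ d1H'.range := by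
  obtain ⟨m, n⟩ := c
  have hmk : ∀ x y : ℤ × ℤ,
      (QuotientAddGroup.mk (x + y) : (ℤ × ℤ) ⧸ H') =
        QuotientAddGroup.mk x + QuotientAddGroup.mk y := fun x y => rfl
  have step1 : ∀ (b : (ℤ × ℤ) ⧸ H') (m : ℤ),
      Pi.single b (1:ℤ) - Pi.single (b + QuotientAddGroup.mk ((m, 0) : ℤ × ℤ)) (1:ℤ)
        ∈ d1H'.range := by
    intro b m
    induction m using Int.induction_on with
    | zero =>
      have h0 : (QuotientAddGroup.mk (((0:ℤ), (0:ℤ)) : ℤ × ℤ) : (ℤ × ℤ) ⧸ H') = 0 := rfl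
      rw [h0, add_zero, sub_self]
      exact zero_mem _
    | succ k ih =>
      have key : d1H' (Pi.single (b + QuotientAddGroup.mk ((k, 0) : ℤ × ℤ)) (1:ℤ), 0) =
          Pi.single (b + QuotientAddGroup.mk ((k, 0) : ℤ × ℤ)) (1:ℤ) -
            Pi.single (b + QuotientAddGroup.mk (((k:ℤ)+1, 0) : ℤ × ℤ)) (1:ℤ) := by
        rw [hd1H'a]
        congr 2
        rw [add_assoc, ← hmk]
        norm_num
      have : Pi.single b (1:ℤ) - Pi.single (b + QuotientAddGroup.mk (((k:ℤ)+1, 0) : ℤ × ℤ)) (1:ℤ)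
          = (Pi.single b (1:ℤ) - Pi.single (b + QuotientAddGroup.mk ((k, 0) : ℤ × ℤ)) (1:ℤ))
            + d1H' (Pi.single (b + QuotientAddGroup.mk ((k, 0) : ℤ × ℤ)) (1:ℤ), 0) := by
        rw [key]; abel
      rw [this]
      exact add_mem ih ⟨_, rfl⟩
    | pred k ih =>
      have key : d1H' (Pi.single (b + QuotientAddGroup.mk ((-(k:ℤ)-1, 0) : ℤ × ℤ)) (1:ℤ), 0) =
          Pi.single (b + QuotientAddGroup.mk ((-(k:ℤ)-1, 0) : ℤ × ℤ)) (1:ℤ) -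
            Pi.single (b + QuotientAddGroup.mk ((-(k:ℤ), 0) : ℤ × ℤ)) (1:ℤ) := by
        rw [hd1H'a]
        congr 2
        rw [add_assoc, ← hmk]
        norm_num
      have : Pi.single b (1:ℤ) - Pi.single (b + QuotientAddGroup.mk ((-(k:ℤ)-1, 0) : ℤ × ℤ)) (1:ℤ)
          = (Pi.single b (1:ℤ) - Pi.single (b + QuotientAddGroup.mk ((-(k:ℤ), 0) : ℤ × ℤ)) (1:ℤ))
            - d1H' (Pi.single (b + QuotientAddGroup.mk ((-(k:ℤ)-1, 0) : ℤ × ℤ)) (1:ℤ), 0) := by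
        rw [key]; abel
      rw [this]
      exact sub_mem ih ⟨_, rfl⟩
  have step2 : ∀ (b : (ℤ × ℤ) ⧸ H') (n : ℤ),
      Pi.single b (1:ℤ) - Pi.single (b + QuotientAddGroup.mk ((0, n) : ℤ × ℤ)) (1:ℤ)
        ∈ d1H'.range := by
    intro b n
    induction n using Int.induction_on with
    | zero =>
      have h0 : (QuotientAddGroup.mk (((0:ℤ), (0:ℤ)) : ℤ × ℤ) : (ℤ × ℤ) ⧸ H') = 0 := rfl
      rw [h0, add_zero, sub_self]
      exact zero_mem _
    | succ k ih =>
      have key : d1H' (0, Pi.single (b + QuotientAddGroup.mk ((0, k) : ℤ × ℤ)) (1:ℤ)) =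
          Pi.single (b + QuotientAddGroup.mk ((0, k) : ℤ × ℤ)) (1:ℤ) -
            Pi.single (b + QuotientAddGroup.mk ((0, (k:ℤ)+1) : ℤ × ℤ)) (1:ℤ) := by
        rw [hd1H'b]
        congr 2
        rw [add_assoc, ← hmk]
        norm_num
      have : Pi.single b (1:ℤ) - Pi.single (b + QuotientAddGroup.mk ((0, (k:ℤ)+1) : ℤ × ℤ)) (1:ℤ)
          = (Pi.single b (1:ℤ) - Pi.single (b + QuotientAddGroup.mk ((0, k) : ℤ × ℤ)) (1:ℤ))
            + d1H' (0, Pi.single (b + QuotientAddGroup.mk ((0, k) : ℤ × ℤ)) (1:ℤ)) := by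
        rw [key]; abel
      rw [this]
      exact add_mem ih ⟨_, rfl⟩
    | pred k ih =>
      have key : d1H' (0, Pi.single (b + QuotientAddGroup.mk ((0, -(k:ℤ)-1) : ℤ × ℤ)) (1:ℤ)) =
          Pi.single (b + QuotientAddGroup.mk ((0, -(k:ℤ)-1) : ℤ × ℤ)) (1:ℤ) -
            Pi.single (b + QuotientAddGroup.mk ((0, -(k:ℤ)) : ℤ × ℤ)) (1:ℤ) := by
        rw [hd1H'b]
        congr 2
        rw [add_assoc, ← hmk]
        norm_num
      have : Pi.single b (1:ℤ) - Pi.single (b + QuotientAddGroup.mk ((0, -(k:ℤ)-1) : ℤ × ℤ)) (1:ℤ)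
          = (Pi.single b (1:ℤ) - Pi.single (b + QuotientAddGroup.mk ((0, -(k:ℤ)) : ℤ × ℤ)) (1:ℤ))
            - d1H' (0, Pi.single (b + QuotientAddGroup.mk ((0, -(k:ℤ)-1) : ℤ × ℤ)) (1:ℤ)) := by
        rw [key]; abel
      rw [this]
      exact sub_mem ih ⟨_, rfl⟩
  have hsplit : (QuotientAddGroup.mk ((m, n) : ℤ × ℤ) : (ℤ × ℤ) ⧸ H') =
      QuotientAddGroup.mk ((m, 0) : ℤ × ℤ) + QuotientAddGroup.mk ((0, n) : ℤ × ℤ) := by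
    rw [show ((m,n):ℤ×ℤ) = ((m,0):ℤ×ℤ)+((0,n):ℤ×ℤ) by norm_num, QuotientAddGroup.mk_add]
  have : (Pi.single a (1:ℤ) - Pi.single (a + QuotientAddGroup.mk ((m, n) : ℤ × ℤ)) (1:ℤ)
       : ((ℤ × ℤ) ⧸ H') → ℤ)
      = (Pi.single a (1:ℤ) - Pi.single (a + QuotientAddGroup.mk ((m, 0) : ℤ × ℤ)) (1:ℤ))
        + (Pi.single (a + QuotientAddGroup.mk ((m, 0) : ℤ × ℤ)) (1:ℤ)
            - Pi.single ((a + QuotientAddGroup.mk ((m, 0) : ℤ × ℤ))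
                + QuotientAddGroup.mk ((0, n) : ℤ × ℤ)) (1:ℤ)) := by
    rw [add_assoc, ← hsplit]; abel
  rw [this]
  exact add_mem (step1 a m) (step2 _ n)




/-- naturality of the chain complexes computing `K_*(C^*(Δ₂/H))` with
respect to a pair of nested finite-index subgroups `H' ⊆ H ≤ ℤ²`.  With `G = ℤ²/H`,
`G' = ℤ²/H'`, `p : G' → G` the natural surjection and `p^*(δ_v) = Σ_{p(u)=v} δ_u`:
(i) `p^* ∘ ∂₁ᴴ = ∂₁ᴴ' ∘ (p^* ⊕ p^*)` and `(p^* ⊕ p^*) ∘ ∂₂ᴴ = ∂₂ᴴ' ∘ p^*`;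
(ii) `p^*(1_G) = 1_{G'}`, so `p^*` maps `ker ∂₂ᴴ` into `ker ∂₂ᴴ'`;
(iii) `p^*` maps `Im ∂₁ᴴ` into `Im ∂₁ᴴ'`, and `p^*(δ_{[0]}) - [H:H']·δ_{[0]'} ∈ Im ∂₁ᴴ'`. -/
theorem covering_naturality_chain_complex (H H' : AddSubgroup (ℤ × ℤ)) (hle : H' ≤ H)
    [Fintype ((ℤ × ℤ) ⧸ H)] [DecidableEq ((ℤ × ℤ) ⧸ H)]
    [Fintype ((ℤ × ℤ) ⧸ H')] [DecidableEq ((ℤ × ℤ) ⧸ H')]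
    (pmap : ((ℤ × ℤ) ⧸ H') →+ ((ℤ × ℤ) ⧸ H))
    (hpmap : ∀ x : ℤ × ℤ,
      pmap (QuotientAddGroup.mk x) = QuotientAddGroup.mk x)
    (pstar : (((ℤ × ℤ) ⧸ H) → ℤ) →+ (((ℤ × ℤ) ⧸ H') → ℤ))
    (hpstar : ∀ v : (ℤ × ℤ) ⧸ H,
      pstar (Pi.single v (1 : ℤ)) =
        ∑ u ∈ Finset.univ.filter (fun u : (ℤ × ℤ) ⧸ H' => pmap u = v), Pi.single u (1 : ℤ))
    (d1H : ((((ℤ × ℤ) ⧸ H) → ℤ) × (((ℤ × ℤ) ⧸ H) → ℤ)) →+ (((ℤ × ℤ) ⧸ H) → ℤ))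
    (hd1Ha : ∀ g : (ℤ × ℤ) ⧸ H,
      d1H (Pi.single g (1 : ℤ), 0) =
        Pi.single g (1 : ℤ) - Pi.single (g + QuotientAddGroup.mk ((1, 0) : ℤ × ℤ)) (1 : ℤ))
    (hd1Hb : ∀ g : (ℤ × ℤ) ⧸ H,
      d1H (0, Pi.single g (1 : ℤ)) =
        Pi.single g (1 : ℤ) - Pi.single (g + QuotientAddGroup.mk ((0, 1) : ℤ × ℤ)) (1 : ℤ))
    (d2H : (((ℤ × ℤ) ⧸ H) → ℤ) →+ ((((ℤ × ℤ) ⧸ H) → ℤ) × (((ℤ × ℤ) ⧸ H) → ℤ)))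
    (hd2H : ∀ g : (ℤ × ℤ) ⧸ H,
      d2H (Pi.single g (1 : ℤ)) =
        (Pi.single (g + QuotientAddGroup.mk ((0, 1) : ℤ × ℤ)) (1 : ℤ) - Pi.single g (1 : ℤ),
         Pi.single g (1 : ℤ) - Pi.single (g + QuotientAddGroup.mk ((1, 0) : ℤ × ℤ)) (1 : ℤ)))
    (d1H' : ((((ℤ × ℤ) ⧸ H') → ℤ) × (((ℤ × ℤ) ⧸ H') → ℤ)) →+ (((ℤ × ℤ) ⧸ H') → ℤ))
    (hd1H'a : ∀ g : (ℤ × ℤ) ⧸ H',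
      d1H' (Pi.single g (1 : ℤ), 0) =
        Pi.single g (1 : ℤ) - Pi.single (g + QuotientAddGroup.mk ((1, 0) : ℤ × ℤ)) (1 : ℤ))
    (hd1H'b : ∀ g : (ℤ × ℤ) ⧸ H',
      d1H' (0, Pi.single g (1 : ℤ)) =
        Pi.single g (1 : ℤ) - Pi.single (g + QuotientAddGroup.mk ((0, 1) : ℤ × ℤ)) (1 : ℤ))
    (d2H' : (((ℤ × ℤ) ⧸ H') → ℤ) →+ ((((ℤ × ℤ) ⧸ H') → ℤ) × (((ℤ × ℤ) ⧸ H') → ℤ)))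
    (hd2H' : ∀ g : (ℤ × ℤ) ⧸ H',
      d2H' (Pi.single g (1 : ℤ)) =
        (Pi.single (g + QuotientAddGroup.mk ((0, 1) : ℤ × ℤ)) (1 : ℤ) - Pi.single g (1 : ℤ),
         Pi.single g (1 : ℤ) - Pi.single (g + QuotientAddGroup.mk ((1, 0) : ℤ × ℤ)) (1 : ℤ))) :
    (∀ x : (((ℤ × ℤ) ⧸ H) → ℤ) × (((ℤ × ℤ) ⧸ H) → ℤ),
      pstar (d1H x) = d1H' (pstar x.1, pstar x.2)) ∧
    (∀ f : ((ℤ × ℤ) ⧸ H) → ℤ,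
      (pstar (d2H f).1, pstar (d2H f).2) = d2H' (pstar f)) ∧
    (pstar (fun _ => (1 : ℤ)) = fun _ => (1 : ℤ)) ∧
    (∀ f ∈ d2H.ker, pstar f ∈ d2H'.ker) ∧
    (∀ x ∈ d1H.range, pstar x ∈ d1H'.range) ∧
    (pstar (Pi.single (0 : (ℤ × ℤ) ⧸ H) (1 : ℤ)) -
        (H'.relIndex H : ℤ) • Pi.single (0 : (ℤ × ℤ) ⧸ H') (1 : ℤ) ∈ d1H'.range) := by
  classical
  have hshift : ∀ (v : (ℤ × ℤ) ⧸ H) (c : ℤ × ℤ),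
      pstar (Pi.single (v + QuotientAddGroup.mk c) (1:ℤ)) =
        ∑ u ∈ Finset.univ.filter (fun u : (ℤ × ℤ) ⧸ H' => pmap u = v),
          Pi.single (u + QuotientAddGroup.mk c) (1:ℤ) := by
    intro v c
    rw [hpstar, covnat_fiber_shift pmap hpmap]
  have ha : ∀ f : ((ℤ × ℤ) ⧸ H) → ℤ, pstar (d1H (f, 0)) = d1H' (pstar f, 0) := by
    intro f
    refine covnat_hom_ext (pstar.comp (d1H.comp (AddMonoidHom.inl _ _)))
      ((d1H'.comp (AddMonoidHom.inl _ _)).comp pstar) (fun g => ?_) f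
    show pstar (d1H (Pi.single g 1, 0)) = d1H' (pstar (Pi.single g 1), 0)
    calc pstar (d1H (Pi.single g 1, 0))
        = pstar (Pi.single g 1) -
            pstar (Pi.single (g + QuotientAddGroup.mk ((1, 0) : ℤ × ℤ)) 1) := by
          rw [hd1Ha, map_sub]
      _ = ∑ u ∈ Finset.univ.filter (fun u : (ℤ × ℤ) ⧸ H' => pmap u = g),
            (Pi.single u (1:ℤ) -
              Pi.single (u + QuotientAddGroup.mk ((1, 0) : ℤ × ℤ)) (1:ℤ)) := by
          rw [hpstar, hshift, Finset.sum_sub_distrib]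
      _ = ∑ u ∈ Finset.univ.filter (fun u : (ℤ × ℤ) ⧸ H' => pmap u = g),
            (d1H'.comp (AddMonoidHom.inl _ _)) (Pi.single u (1:ℤ)) :=
          Finset.sum_congr rfl fun u _ => (hd1H'a u).symm
      _ = (d1H'.comp (AddMonoidHom.inl _ _))
            (∑ u ∈ Finset.univ.filter (fun u : (ℤ × ℤ) ⧸ H' => pmap u = g),
              Pi.single u (1:ℤ)) := (map_sum _ _ _).symm
      _ = d1H' (pstar (Pi.single g 1), 0) := by rw [hpstar]; rfl
  have hb : ∀ f : ((ℤ × ℤ) ⧸ H) → ℤ, pstar (d1H (0, f)) = d1H' (0, pstar f) := by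
    intro f
    refine covnat_hom_ext (pstar.comp (d1H.comp (AddMonoidHom.inr _ _)))
      ((d1H'.comp (AddMonoidHom.inr _ _)).comp pstar) (fun g => ?_) f
    show pstar (d1H (0, Pi.single g 1)) = d1H' (0, pstar (Pi.single g 1))
    calc pstar (d1H (0, Pi.single g 1))
        = pstar (Pi.single g 1) -
            pstar (Pi.single (g + QuotientAddGroup.mk ((0, 1) : ℤ × ℤ)) 1) := by
          rw [hd1Hb, map_sub]
      _ = ∑ u ∈ Finset.univ.filter (fun u : (ℤ × ℤ) ⧸ H' => pmap u = g),
            (Pi.single u (1:ℤ) -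
              Pi.single (u + QuotientAddGroup.mk ((0, 1) : ℤ × ℤ)) (1:ℤ)) := by
          rw [hpstar, hshift, Finset.sum_sub_distrib]
      _ = ∑ u ∈ Finset.univ.filter (fun u : (ℤ × ℤ) ⧸ H' => pmap u = g),
            (d1H'.comp (AddMonoidHom.inr _ _)) (Pi.single u (1:ℤ)) :=
          Finset.sum_congr rfl fun u _ => (hd1H'b u).symm
      _ = (d1H'.comp (AddMonoidHom.inr _ _))
            (∑ u ∈ Finset.univ.filter (fun u : (ℤ × ℤ) ⧸ H' => pmap u = g),
              Pi.single u (1:ℤ)) := (map_sum _ _ _).symm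
      _ = d1H' (0, pstar (Pi.single g 1)) := by rw [hpstar]; rfl
  have part1 : ∀ x : (((ℤ × ℤ) ⧸ H) → ℤ) × (((ℤ × ℤ) ⧸ H) → ℤ),
      pstar (d1H x) = d1H' (pstar x.1, pstar x.2) := by
    intro x
    have hx : (x.1, (0 : ((ℤ × ℤ) ⧸ H) → ℤ)) + ((0 : ((ℤ × ℤ) ⧸ H) → ℤ), x.2) = x := by
      simp
    calc pstar (d1H x) = pstar (d1H (x.1, 0)) + pstar (d1H (0, x.2)) := by
          rw [← map_add, ← map_add, hx]
      _ = d1H' (pstar x.1, 0) + d1H' (0, pstar x.2) := by rw [ha, hb]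
      _ = d1H' (pstar x.1, pstar x.2) := by rw [← map_add]; simp
  have h2a : ∀ f : ((ℤ × ℤ) ⧸ H) → ℤ, pstar ((d2H f).1) = (d2H' (pstar f)).1 := by
    intro f
    refine covnat_hom_ext (pstar.comp ((AddMonoidHom.fst _ _).comp d2H))
      (((AddMonoidHom.fst _ _).comp d2H').comp pstar) (fun g => ?_) f
    show pstar ((d2H (Pi.single g 1)).1) = (d2H' (pstar (Pi.single g 1))).1
    calc pstar ((d2H (Pi.single g 1)).1)
        = pstar (Pi.single (g + QuotientAddGroup.mk ((0, 1) : ℤ × ℤ)) 1) -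
            pstar (Pi.single g 1) := by
          rw [hd2H]; exact map_sub _ _ _
      _ = ∑ u ∈ Finset.univ.filter (fun u : (ℤ × ℤ) ⧸ H' => pmap u = g),
            (Pi.single (u + QuotientAddGroup.mk ((0, 1) : ℤ × ℤ)) (1:ℤ) -
              Pi.single u (1:ℤ)) := by
          rw [hshift, hpstar, Finset.sum_sub_distrib]
      _ = ∑ u ∈ Finset.univ.filter (fun u : (ℤ × ℤ) ⧸ H' => pmap u = g),
            ((AddMonoidHom.fst _ _).comp d2H') (Pi.single u (1:ℤ)) :=
          Finset.sum_congr rfl fun u _ => (congrArg Prod.fst (hd2H' u)).symm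
      _ = ((AddMonoidHom.fst _ _).comp d2H')
            (∑ u ∈ Finset.univ.filter (fun u : (ℤ × ℤ) ⧸ H' => pmap u = g),
              Pi.single u (1:ℤ)) := (map_sum _ _ _).symm
      _ = (d2H' (pstar (Pi.single g 1))).1 := by rw [hpstar]; rfl
  have h2b : ∀ f : ((ℤ × ℤ) ⧸ H) → ℤ, pstar ((d2H f).2) = (d2H' (pstar f)).2 := by
    intro f
    refine covnat_hom_ext (pstar.comp ((AddMonoidHom.snd _ _).comp d2H))
      (((AddMonoidHom.snd _ _).comp d2H').comp pstar) (fun g => ?_) f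
    show pstar ((d2H (Pi.single g 1)).2) = (d2H' (pstar (Pi.single g 1))).2
    calc pstar ((d2H (Pi.single g 1)).2)
        = pstar (Pi.single g 1) -
            pstar (Pi.single (g + QuotientAddGroup.mk ((1, 0) : ℤ × ℤ)) 1) := by
          rw [hd2H]; exact map_sub _ _ _
      _ = ∑ u ∈ Finset.univ.filter (fun u : (ℤ × ℤ) ⧸ H' => pmap u = g),
            (Pi.single u (1:ℤ) -
              Pi.single (u + QuotientAddGroup.mk ((1, 0) : ℤ × ℤ)) (1:ℤ)) := by
          rw [hpstar, hshift, Finset.sum_sub_distrib]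
      _ = ∑ u ∈ Finset.univ.filter (fun u : (ℤ × ℤ) ⧸ H' => pmap u = g),
            ((AddMonoidHom.snd _ _).comp d2H') (Pi.single u (1:ℤ)) :=
          Finset.sum_congr rfl fun u _ => (congrArg Prod.snd (hd2H' u)).symm
      _ = ((AddMonoidHom.snd _ _).comp d2H')
            (∑ u ∈ Finset.univ.filter (fun u : (ℤ × ℤ) ⧸ H' => pmap u = g),
              Pi.single u (1:ℤ)) := (map_sum _ _ _).symm
      _ = (d2H' (pstar (Pi.single g 1))).2 := by rw [hpstar]; rfl
  have part2 : ∀ f : ((ℤ × ℤ) ⧸ H) → ℤ,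
      (pstar (d2H f).1, pstar (d2H f).2) = d2H' (pstar f) := fun f =>
    Prod.ext (h2a f) (h2b f)
  have part3 : pstar (fun _ => (1:ℤ)) = fun _ => (1:ℤ) := by
    calc pstar (fun _ => (1:ℤ)) = ∑ v : (ℤ × ℤ) ⧸ H, pstar (Pi.single v 1) := by
          rw [covnat_one_eq_sum_single, map_sum]
      _ = ∑ v : (ℤ × ℤ) ⧸ H, ∑ u ∈ Finset.univ.filter (fun u : (ℤ × ℤ) ⧸ H' => pmap u = v),
            Pi.single u (1:ℤ) := Finset.sum_congr rfl fun v _ => hpstar v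
      _ = ∑ u : (ℤ × ℤ) ⧸ H', Pi.single u (1:ℤ) :=
          Finset.sum_fiberwise Finset.univ pmap (fun u => Pi.single u (1:ℤ))
      _ = fun _ => (1:ℤ) := covnat_one_eq_sum_single.symm
  refine ⟨part1, part2, part3, ?_, ?_, ?_⟩
  · intro f hf
    rw [AddMonoidHom.mem_ker] at hf ⊢
    rw [← part2 f, hf]
    simp
  · rintro x ⟨y, rfl⟩
    exact ⟨(pstar y.1, pstar y.2), (part1 y).symm⟩
  · have hsurj : Function.Surjective pmap := by
      intro v
      obtain ⟨x, rfl⟩ := QuotientAddGroup.mk_surjective v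
      exact ⟨QuotientAddGroup.mk x, hpmap x⟩
    have h1 := AddSubgroup.card_eq_card_quotient_mul_card_addSubgroup pmap.ker
    rw [Nat.card_congr (QuotientAddGroup.quotientKerEquivOfSurjective pmap hsurj).toEquiv] at h1
    have h2 : H'.relIndex H * Nat.card ((ℤ × ℤ) ⧸ H) = Nat.card ((ℤ × ℤ) ⧸ H') := by
      have h3 := AddSubgroup.relIndex_mul_index hle
      rwa [AddSubgroup.index_eq_card, AddSubgroup.index_eq_card] at h3
    have hpos : 0 < Nat.card ((ℤ × ℤ) ⧸ H) := Nat.card_pos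
    have hker : Nat.card pmap.ker = H'.relIndex H := by
      have h4 : Nat.card ((ℤ × ℤ) ⧸ H) * Nat.card pmap.ker =
          Nat.card ((ℤ × ℤ) ⧸ H) * H'.relIndex H := by
        rw [← h1, ← h2]; ring
      exact Nat.eq_of_mul_eq_mul_left hpos h4
    have hKcard : (Finset.univ.filter (fun u : (ℤ × ℤ) ⧸ H' => pmap u = 0)).card =
        H'.relIndex H := by
      have hc1 : Nat.card pmap.ker = Nat.card {u : (ℤ × ℤ) ⧸ H' // pmap u = 0} :=
        Nat.card_congr (Equiv.subtypeEquivRight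
          (fun u : (ℤ × ℤ) ⧸ H' => by simp [AddMonoidHom.mem_ker]))
      have hc2 : Nat.card {u : (ℤ × ℤ) ⧸ H' // pmap u = 0} =
          (Finset.univ.filter (fun u : (ℤ × ℤ) ⧸ H' => pmap u = 0)).card := by
        rw [Nat.card_eq_fintype_card]
        exact Fintype.card_subtype _
      rw [← hker, hc1, hc2]
    have key : pstar (Pi.single (0 : (ℤ × ℤ) ⧸ H) (1:ℤ)) -
        (H'.relIndex H : ℤ) • Pi.single (0 : (ℤ × ℤ) ⧸ H') (1:ℤ)
        = ∑ u ∈ Finset.univ.filter (fun u : (ℤ × ℤ) ⧸ H' => pmap u = 0),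
            (Pi.single u (1:ℤ) - Pi.single (0 : (ℤ × ℤ) ⧸ H') (1:ℤ)) := by
      rw [hpstar, Finset.sum_sub_distrib, Finset.sum_const, ← hKcard, natCast_zsmul]
    rw [key]
    refine sum_mem fun u hu => ?_
    obtain ⟨c, rfl⟩ := QuotientAddGroup.mk_surjective u
    have hm := covnat_trans_mem d1H' hd1H'a hd1H'b 0 c
    rw [zero_add] at hm
    simpa [neg_sub] using neg_mem hm
end
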